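/- arXiv:1403.4376 — 8 statements merged into one kernel-verified Lean document; each statement's English description precedes it below -/
import Mathlib

section
/- For all integers 1 ≤ r ≤ k there exists a map φ : Δ_k → C([0, ω^r]) such that (r/k)·d_Δ(σ,τ) ≤ ‖φ(σ) − φ(τ)‖_∞ ≤ d_Δ(σ,τ) for all σ, τ ∈ Δ_k; in particular, Δ_k admits a bi-Lipschitz embedding into C([0, ω^r]) with distortion at most k/r. -/
/-!
Every ordinal `x ≤ ω^r` codes a finite set `code r x ⊆ ℕ` with at most `r` elements, every
nonempty set with at most `r` elements is coded, and for each `N` the trace `code r x ∩ [0, N]` is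
a locally constant function of `x`. A finite set `σ` is sent to `x ↦ ∑_{n ∈ σ} w(code r x, n + 1)`,
where `w(U, ·)` is `1` on `U`, `-1` above `min U` off `U` and `0` below `min U`. These functions
are locally constant, hence continuous, and `1`-Lipschitz in `σ` because `|w| ≤ 1`.

For the lower bound let `S`, `T` be `σ \ τ` and `τ \ σ` shifted by one, named so that the `r`-th
largest element of `T` is below that of `S`, and let `U` be the `r` largest elements of `T` (or
`T ∪ {0}` if `|T| < r`). At the point coding `U` the two functions differ by
`|T ∩ U| + |{m ∈ S | min U ≤ m}| ≥ min(|σ △ τ|, 2r) ≥ (r/k)·|σ △ τ|`.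
-/

/-- The compact space `[0, α]` of ordinals `≤ α` with the order topology. -/
noncomputable instance (a : Ordinal) : CompactSpace (Set.Iic a) :=
  isCompact_iff_compactSpace.mp (by rw [← Set.Icc_bot]; exact isCompact_Icc)

universe u

namespace DeltaEmbedding

section Weight

open Finset

def weight (U : Finset ℕ) (n : ℕ) : ℝ :=
  if n ∈ U then 1 else if ∃ m ∈ U, m ≤ n then -1 else 0

lemma weight_inter_Iic {U : Finset ℕ} {n N : ℕ} (hn : n ≤ N) :
    weight (U ∩ Finset.Iic N) n = weight U n := by
  have hex : (∃ m ∈ U ∩ Finset.Iic N, m ≤ n) ↔ ∃ m ∈ U, m ≤ n := by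
    simp only [mem_inter, mem_Iic]
    exact ⟨fun ⟨m, hm, hmn⟩ => ⟨m, hm.1, hmn⟩, fun ⟨m, hm, hmn⟩ => ⟨m, ⟨hm, hmn.trans hn⟩, hmn⟩⟩
  unfold weight
  rw [if_congr Iff.rfl rfl (if_congr hex rfl rfl)]
  simp only [mem_inter, mem_Iic, hn, and_true]

lemma abs_weight_le_one (U : Finset ℕ) (n : ℕ) : |weight U n| ≤ 1 := by
  unfold weight
  split_ifs <;> simp

lemma abs_sum_weight_le_card (U s : Finset ℕ) : |∑ n ∈ s, weight U (n + 1)| ≤ #s := by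
  refine (abs_sum_le_sum_abs _ _).trans ?_
  simpa using sum_le_card_nsmul s _ 1 fun n _ => abs_weight_le_one U (n + 1)

lemma weight_of_isLeast {U : Finset ℕ} {a : ℕ} (ha : IsLeast (U : Set ℕ) a) (n : ℕ) :
    weight U n = if n ∈ U then 1 else if a ≤ n then -1 else 0 := by
  have hex : (∃ m ∈ U, m ≤ n) ↔ a ≤ n :=
    ⟨fun ⟨m, hm, hmn⟩ => (ha.2 hm).trans hmn, fun h => ⟨a, ha.1, h⟩⟩
  simp only [weight, hex]

lemma exists_mem_card_filter_le_eq {T : Finset ℕ} {r : ℕ} (hr : 1 ≤ r) (hT : r ≤ #T) :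
    ∃ a ∈ T, #{m ∈ T | a ≤ m} = r := by
  induction T using induction_on_max generalizing r with
  | empty => simp at hT; omega
  | insert M T hlt ih =>
    have hM : M ∉ T := fun h => lt_irrefl M (hlt M h)
    rcases hr.eq_or_lt with rfl | hr
    · refine ⟨M, mem_insert_self M T, ?_⟩
      rw [filter_insert, if_pos le_rfl, filter_false_of_mem fun m hm => not_le.2 (hlt m hm),
        insert_empty, card_singleton]
    · obtain ⟨a, ha, hcard⟩ := ih (r := r - 1) (by omega)
        (by rw [card_insert_of_notMem hM] at hT; omega)
      refine ⟨a, mem_insert_of_mem ha, ?_⟩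
      rw [filter_insert, if_pos (hlt a ha).le, card_insert_of_notMem (by simp [hM]), hcard]
      omega

lemma exists_threshold (T : Finset ℕ) {r : ℕ} (hr : 1 ≤ r) :
    ∃ a, #(insert a {m ∈ T | a ≤ m}) ≤ r ∧ (a ∈ T ∧ #{m ∈ T | a ≤ m} = r ∨ a = 0) := by
  rcases le_or_gt r #T with hT | hT
  · obtain ⟨a, ha, hcard⟩ := exists_mem_card_filter_le_eq hr hT
    refine ⟨a, ?_, Or.inl ⟨ha, hcard⟩⟩
    rw [insert_eq_of_mem (mem_filter.2 ⟨ha, le_rfl⟩), hcard]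
  · refine ⟨0, ?_, Or.inr rfl⟩
    simp only [zero_le, filter_true_of_mem, implies_true]
    exact (card_insert_le _ _).trans hT

lemma sum_weight_sub_sum_weight {S T : Finset ℕ} (hST : Disjoint S T) {a : ℕ} (ha : a ∉ S) :
    ∑ m ∈ T, weight (insert a {m ∈ T | a ≤ m}) m - ∑ m ∈ S, weight (insert a {m ∈ T | a ≤ m}) m
      = #{m ∈ T | a ≤ m} + #{m ∈ S | a ≤ m} := by
  have hleast : IsLeast (↑(insert a {m ∈ T | a ≤ m}) : Set ℕ) a := by
    refine ⟨mem_coe.2 (mem_insert_self a _), fun m hm => ?_⟩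
    rcases mem_insert.1 (mem_coe.1 hm) with rfl | hm
    · exact le_rfl
    · exact (mem_filter.1 hm).2
  have hT : ∀ m ∈ T, weight (insert a {m ∈ T | a ≤ m}) m = if a ≤ m then 1 else 0 := by
    intro m hm
    rw [weight_of_isLeast hleast]
    by_cases h : a ≤ m
    · simp [hm, h]
    · have hma : m ≠ a := by omega
      simp [h, hma]
  have hS : ∀ m ∈ S, weight (insert a {m ∈ T | a ≤ m}) m = -(if a ≤ m then 1 else 0) := by
    intro m hm
    have hmT : m ∉ T := disjoint_left.1 hST hm
    have hma : m ≠ a := by rintro rfl; exact ha hm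
    rw [weight_of_isLeast hleast]
    by_cases h : a ≤ m <;> simp [hmT, hma, h]
  rw [sum_congr rfl hT, sum_congr rfl hS, sum_neg_distrib, sum_boole, sum_boole, sub_neg_eq_add]

lemma exists_min_le_abs_sum_weight_sub {r : ℕ} (hr : 1 ≤ r) {S T : Finset ℕ} (hST : Disjoint S T)
    (h0S : 0 ∉ S) (h0T : 0 ∉ T) : ∃ U : Finset ℕ, U.Nonempty ∧ #U ≤ r ∧
      ((min (#S + #T) (2 * r) : ℕ) : ℝ) ≤ |∑ m ∈ S, weight U m - ∑ m ∈ T, weight U m| := by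
  obtain ⟨a, haU, haT⟩ := exists_threshold T hr
  obtain ⟨b, hbU, hbS⟩ := exists_threshold S hr
  wlog hab : a ≤ b generalizing S T a b
  · obtain ⟨U, hU, hUr, hbound⟩ := this hST.symm h0T h0S b hbU hbS a haU haT (by omega)
    exact ⟨U, hU, hUr, by rwa [add_comm, abs_sub_comm]⟩
  have haS : a ∉ S := by
    rcases haT with ⟨ha, -⟩ | rfl
    · exact disjoint_right.1 hST ha
    · exact h0S
  refine ⟨_, insert_nonempty _ _, haU, ?_⟩
  rw [abs_sub_comm, sum_weight_sub_sum_weight hST haS]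
  refine le_trans ?_ (le_abs_self _)
  norm_cast
  rcases haT with ⟨haT, haT_card⟩ | rfl
  · obtain ⟨hbS, hbS_card⟩ : b ∈ S ∧ #{m ∈ S | b ≤ m} = r := by
      refine hbS.resolve_right ?_
      rintro rfl
      exact h0T (Nat.le_zero.1 hab ▸ haT)
    have hSab : #{m ∈ S | b ≤ m} ≤ #{m ∈ S | a ≤ m} :=
      card_le_card fun m hm => by
        rw [mem_filter] at hm ⊢
        exact ⟨hm.1, hab.trans hm.2⟩
    omega
  · simp only [zero_le, filter_true_of_mem, implies_true]
    omega

end Weight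

section Code

open Ordinal Order Topology

/-- Writing `x = ω * q + n`, the code of `x` is the code of `q` one level down when `n = 0`;
otherwise it is the code `U` of `q + 1` with the new element `max U + (n - 1)` added
(`max ∅ = 0`), which leaves every bounded window as `x` increases to `ω * (q + 1)`. -/
noncomputable def code : ℕ → Ordinal → Finset ℕ
  | 0, x => if x = 0 then {0} else ∅
  | r + 1, x =>
    match (x % ω).card.toNat with
    | 0 => code r (x / ω)
    | n + 1 => insert ((code r (x / ω + 1)).sup id + n) (code r (x / ω + 1))

lemma omega0_mul_add_div (q : Ordinal) (n : ℕ) : (ω * q + n) / ω = q := by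
  rw [mul_add_div _ omega0_ne_zero, div_eq_zero_of_lt (natCast_lt_omega0 n), add_zero]

lemma toNat_card_omega0_mul_add_mod (q : Ordinal) (n : ℕ) :
    ((ω * q + n) % ω).card.toNat = n := by
  rw [mul_add_mod_self, mod_eq_of_lt (natCast_lt_omega0 n), card_nat, Cardinal.toNat_natCast]

lemma exists_omega0_mul_div_add_eq (x : Ordinal) : ∃ n : ℕ, ω * (x / ω) + n = x := by
  obtain ⟨n, hn⟩ := lt_omega0.1 (mod_lt x omega0_ne_zero)
  exact ⟨n, hn ▸ div_add_mod x ω⟩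

lemma omega0_mul_add_lt (q : Ordinal) (n : ℕ) : ω * q + n < ω * (q + 1) := by
  rw [mul_add_one]
  exact add_lt_add_right (natCast_lt_omega0 n) _

lemma omega0_opow_succ (r : ℕ) : ω ^ ((r + 1 : ℕ) : Ordinal) = ω * ω ^ (r : Ordinal) := by
  rw [opow_natCast, opow_natCast, pow_succ']

lemma code_succ_omega0_mul (r : ℕ) (q : Ordinal) : code (r + 1) (ω * q) = code r q := by
  have hmod := toNat_card_omega0_mul_add_mod q 0
  have hdiv := omega0_mul_add_div q 0
  rw [Nat.cast_zero, add_zero] at hmod hdiv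
  rw [code, hmod, hdiv]

lemma code_succ_omega0_mul_add_add_one (r : ℕ) (q : Ordinal) (n : ℕ) :
    code (r + 1) (ω * q + n + 1) = insert ((code r (q + 1)).sup id + n) (code r (q + 1)) := by
  rw [add_assoc, ← Nat.cast_add_one, code, toNat_card_omega0_mul_add_mod, omega0_mul_add_div]

lemma exists_succ_code_succ_eq_insert {r : ℕ} {q : Ordinal.{u}} (hq : q + 1 ≤ ω ^ (r : Ordinal))
    {M : ℕ} (hM : (code r (q + 1)).sup id ≤ M) :
    ∃ p : Ordinal.{u}, p + 1 ≤ ω ^ ((r + 1 : ℕ) : Ordinal) ∧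
      code (r + 1) (p + 1) = insert M (code r (q + 1)) := by
  refine ⟨ω * q + (M - (code r (q + 1)).sup id : ℕ), ?_, ?_⟩
  · rw [omega0_opow_succ, add_one_le_iff]
    exact (omega0_mul_add_lt _ _).trans_le (mul_le_mul_right hq _)
  · rw [code_succ_omega0_mul_add_add_one, Nat.add_sub_cancel' hM]

/-- Nonempty sets are coded at successor ordinals, so that the step `U ↦ insert M U` is
available at the next level. -/
lemma exists_succ_code_eq (r : ℕ) {U : Finset ℕ} (hU : U.Nonempty) (hcard : U.card ≤ r) :
    ∃ q, q + 1 ≤ ω ^ (r : Ordinal) ∧ code r (q + 1) = U := by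
  induction r generalizing U with
  | zero => exact absurd (Finset.card_pos.2 hU) (by omega)
  | succ r ih =>
    rcases hcard.lt_or_eq with hlt | heq
    · obtain ⟨q, hq, rfl⟩ := ih hU (by omega)
      obtain ⟨M, hM, hsup⟩ := Finset.exists_mem_eq_sup _ hU id
      obtain ⟨p, hp, hcode⟩ := exists_succ_code_succ_eq_insert hq hsup.le
      exact ⟨p, hp, hcode.trans (Finset.insert_eq_of_mem hM)⟩
    · have hmax := U.max'_mem hU
      have hcard_erase : (U.erase (U.max' hU)).card = r := by
        rw [Finset.card_erase_of_mem hmax, heq, Nat.add_sub_cancel]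
      obtain ⟨q, hq, hcode⟩ :
          ∃ q, q + 1 ≤ ω ^ (r : Ordinal) ∧ code r (q + 1) = U.erase (U.max' hU) := by
        rcases (U.erase (U.max' hU)).eq_empty_or_nonempty with he | hne
        · obtain rfl : r = 0 := by rw [← hcard_erase, he, Finset.card_empty]
          exact ⟨0, by simp, by simp [he, code]⟩
        · exact ih hne hcard_erase.le
      have hM : (code r (q + 1)).sup id ≤ U.max' hU := by
        rw [hcode]
        exact Finset.sup_le fun u hu => U.le_max' u (Finset.mem_of_mem_erase hu)
      obtain ⟨p, hp, hcode'⟩ := exists_succ_code_succ_eq_insert hq hM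
      exact ⟨p, hp, by rw [hcode', hcode, Finset.insert_erase hmax]⟩

/-- The second conjunct (large elements appear just below a limit) is what makes the induction go
through: it pushes the new element of the successor step out of `[0, N]`. -/
lemma exists_code_inter_Iic_eq_of_isSuccLimit (r N : ℕ) {L : Ordinal} (hL : L ≤ ω ^ (r : Ordinal))
    (hlim : IsSuccLimit L) : ∃ γ < L, ∀ x ∈ Set.Ioo γ L,
      code r x ∩ Finset.Iic N = code r L ∩ Finset.Iic N ∧ ∃ u ∈ code r x, N < u := by
  induction r generalizing L with
  | zero =>
    have := (omega0_le_of_isSuccLimit hlim).trans hL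
    simp [one_lt_omega0.not_ge] at this
  | succ r ih =>
    obtain ⟨Q, rfl⟩ := isSuccPrelimit_iff_omega0_dvd.1 hlim.isSuccPrelimit
    have hQ : Q ≤ ω ^ (r : Ordinal) :=
      (mul_le_mul_iff_right₀ omega0_pos).1 (hL.trans_eq (omega0_opow_succ r))
    rw [code_succ_omega0_mul]
    rcases zero_or_succ_or_isSuccLimit Q with rfl | ⟨Q, rfl⟩ | hQ_lim
    · simp at hlim
    · rw [succ_eq_add_one] at *
      refine ⟨ω * Q + (N + 1 : ℕ), omega0_mul_add_lt _ _, fun x hx => ?_⟩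
      have hxQ : x / ω = Q := by
        refine le_antisymm (lt_add_one_iff.1 ((lt_mul_iff_div_lt omega0_ne_zero).1 hx.2)) ?_
        exact (mul_le_iff_le_div omega0_ne_zero).1 (le_self_add.trans hx.1.le)
      obtain ⟨n, rfl⟩ := hxQ ▸ exists_omega0_mul_div_add_eq x
      have hNn : N + 1 < n := by exact_mod_cast (add_lt_add_iff_left _).1 hx.1
      obtain ⟨m, rfl⟩ : ∃ m, n = m + 1 := ⟨n - 1, by omega⟩
      rw [Nat.cast_add_one, ← add_assoc, code_succ_omega0_mul_add_add_one]
      exact ⟨Finset.insert_inter_of_notMem (by simp; omega), _, Finset.mem_insert_self _ _,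
        by omega⟩
    · obtain ⟨γ, hγ, h⟩ := ih hQ hQ_lim
      refine ⟨ω * (γ + 1), (mul_lt_mul_iff_right₀ omega0_pos).2 (hQ_lim.add_one_lt hγ),
        fun x hx => ?_⟩
      have hγx : γ < x / ω :=
        (lt_add_one γ).trans_le ((mul_le_iff_le_div omega0_ne_zero).1 hx.1.le)
      have hxQ : x / ω < Q := (lt_mul_iff_div_lt omega0_ne_zero).1 hx.2
      obtain ⟨n, hn⟩ := exists_omega0_mul_div_add_eq x
      rw [← hn]
      rcases n with _ | m
      · rw [Nat.cast_zero, add_zero, code_succ_omega0_mul]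
        exact h _ ⟨hγx, hxQ⟩
      · obtain ⟨hinter, u, hu, hNu⟩ :=
          h (x / ω + 1) ⟨hγx.trans (lt_add_one _), hQ_lim.add_one_lt hxQ⟩
        have hN : N < (code r (x / ω + 1)).sup id + m :=
          (hNu.trans_le (Finset.le_sup (f := id) hu)).trans_le le_self_add
        rw [Nat.cast_add_one, ← add_assoc, code_succ_omega0_mul_add_add_one,
          Finset.insert_inter_of_notMem (by simpa using hN), hinter]
        exact ⟨rfl, u, Finset.mem_insert_of_mem hu, hNu⟩

lemma isLocallyConstant_code_inter_Iic (r N : ℕ) :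
    IsLocallyConstant fun x : Set.Iic (ω ^ (r : Ordinal)) => code r x ∩ Finset.Iic N := by
  rw [IsLocallyConstant.iff_eventually_eq]
  rintro ⟨x, hx⟩
  suffices ∀ᶠ y in 𝓝 x, code r y ∩ Finset.Iic N = code r x ∩ Finset.Iic N from
    (continuous_subtype_val.tendsto (⟨x, hx⟩ : Set.Iic (ω ^ (r : Ordinal)))).eventually this
  by_cases hlim : IsSuccLimit x
  · obtain ⟨γ, hγ, h⟩ := exists_code_inter_Iic_eq_of_isSuccLimit r N hx hlim
    rw [(SuccOrder.hasBasis_nhds_Ioc_of_exists_lt ⟨γ, hγ⟩).eventually_iff]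
    refine ⟨γ, hγ, fun y hy => ?_⟩
    rcases hy.2.eq_or_lt with rfl | hyx
    · rfl
    · exact (h y ⟨hy.1, hyx⟩).1
  · rw [SuccOrder.nhds_eq_pure.2 hlim]
    exact Filter.eventually_pure.2 rfl

end Code

section Embedding

open scoped Ordinal
open Finset

lemma isLocallyConstant_sum_weight_code (r : ℕ) (σ : Finset ℕ) :
    IsLocallyConstant fun x : Set.Iic (ω ^ (r : Ordinal)) =>
      ∑ n ∈ σ, weight (code r x) (n + 1) := by
  convert (isLocallyConstant_code_inter_Iic r (σ.sup id + 1)).comp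
    (fun V => ∑ n ∈ σ, weight V (n + 1)) using 1
  funext x
  refine sum_congr rfl fun n hn => (weight_inter_Iic ?_).symm
  exact Nat.succ_le_succ (le_sup (f := id) hn)

/-- The shift `n ↦ n + 1` keeps `0` out of the coordinates, so that `0` can be added to a code as
an extra minimum. -/
noncomputable def embedding (r : ℕ) (σ : Finset ℕ) : C(Set.Iic (ω ^ (r : Ordinal)), ℝ) :=
  ⟨fun x => ∑ n ∈ σ, weight (code r x) (n + 1),
    (isLocallyConstant_sum_weight_code r σ).continuous⟩

lemma embedding_sub_apply (r : ℕ) (σ τ : Finset ℕ) (x : Set.Iic (ω ^ (r : Ordinal))) :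
    (embedding r σ - embedding r τ) x =
      ∑ n ∈ σ \ τ, weight (code r x) (n + 1) - ∑ n ∈ τ \ σ, weight (code r x) (n + 1) :=
  sum_sdiff_sub_sum_sdiff.symm

lemma card_symmDiff_eq {α : Type*} [DecidableEq α] (s t : Finset α) :
    #(symmDiff s t) = #(s \ t) + #(t \ s) := by
  rw [Finset.symmDiff_def, card_union_of_disjoint disjoint_sdiff_sdiff]

lemma norm_embedding_sub_le (r : ℕ) (σ τ : Finset ℕ) :
    ‖embedding r σ - embedding r τ‖ ≤ #(symmDiff σ τ) := by
  refine (ContinuousMap.norm_le _ (Nat.cast_nonneg _)).2 fun x => ?_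
  rw [embedding_sub_apply, Real.norm_eq_abs, card_symmDiff_eq, Nat.cast_add]
  exact (abs_sub _ _).trans (add_le_add (abs_sum_weight_le_card _ _) (abs_sum_weight_le_card _ _))

lemma min_card_symmDiff_le_norm_embedding_sub {r : ℕ} (hr : 1 ≤ r) (σ τ : Finset ℕ) :
    ((min #(symmDiff σ τ) (2 * r) : ℕ) : ℝ) ≤ ‖embedding r σ - embedding r τ‖ := by
  let succ : ℕ ↪ ℕ := ⟨(· + 1), add_left_injective 1⟩
  have h0 : ∀ s : Finset ℕ, 0 ∉ s.map succ := by simp [succ]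
  obtain ⟨U, hU, hUr, hbound⟩ := exists_min_le_abs_sum_weight_sub hr
    ((disjoint_map succ).2 disjoint_sdiff_sdiff) (h0 (σ \ τ)) (h0 (τ \ σ))
  obtain ⟨q, hq, rfl⟩ := exists_succ_code_eq r hU hUr
  have h := ContinuousMap.norm_coe_le_norm (embedding r σ - embedding r τ) ⟨q + 1, hq⟩
  rw [embedding_sub_apply, Real.norm_eq_abs] at h
  rw [card_symmDiff_eq]
  simp only [sum_map, card_map] at hbound
  exact hbound.trans h

lemma div_mul_le_min {r k d : ℕ} (hrk : r ≤ k) (hd : d ≤ 2 * k) :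
    (r / k : ℝ) * d ≤ (min d (2 * r) : ℕ) := by
  rcases Nat.eq_zero_or_pos k with rfl | hk
  · simp
  rw [div_mul_eq_mul_div, div_le_iff₀ (by exact_mod_cast hk)]
  norm_cast
  rcases le_total d (2 * r) with h | h
  · rw [min_eq_left h, mul_comm d]
    exact Nat.mul_le_mul_right d hrk
  · rw [min_eq_right h]
    exact (Nat.mul_le_mul_left r hd).trans_eq (by ring)

end Embedding

end DeltaEmbedding

/-- For all integers `1 ≤ r ≤ k` there is a map `φ : Δ_k → C([0, ω^r])` with
`(r/k)·d_Δ(σ,τ) ≤ ‖φ(σ) − φ(τ)‖ ≤ d_Δ(σ,τ)` for all `σ, τ ∈ Δ_k`; in particular `Δ_k`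
embeds bi-Lipschitzly into `C([0, ω^r])` with distortion at most `k/r`. -/
theorem deltaK_embeds_C_omega_pow_r (k r : ℕ) (hr : 1 ≤ r) (hrk : r ≤ k) :
    ∃ φ : {σ : Finset ℕ // σ.card ≤ k} → C(↥(Set.Iic (Ordinal.omega0 ^ (r : Ordinal))), ℝ),
      ∀ σ τ : {σ : Finset ℕ // σ.card ≤ k},
        ((r : ℝ) / (k : ℝ)) * ((symmDiff σ.1 τ.1).card : ℝ) ≤ ‖φ σ - φ τ‖ ∧
          ‖φ σ - φ τ‖ ≤ ((symmDiff σ.1 τ.1).card : ℝ) := by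
  refine ⟨fun σ => DeltaEmbedding.embedding r σ.1,
    fun σ τ => ⟨?_, DeltaEmbedding.norm_embedding_sub_le r σ.1 τ.1⟩⟩
  have hd : (symmDiff σ.1 τ.1).card ≤ 2 * k :=
    ((Finset.card_le_card Finset.symmDiff_subset_union).trans (Finset.card_union_le _ _)).trans
      ((add_le_add σ.2 τ.2).trans_eq (two_mul k).symm)
  exact (DeltaEmbedding.div_mul_le_min hrk hd).trans
    (DeltaEmbedding.min_card_symmDiff_le_norm_embedding_sub hr σ.1 τ.1)
end

section
/- For every integer k ≥ 1 the metric space Δ_k embeds isometrically into C([0, ω^k]): there exists a map φ : Δ_k → C([0, ω^k]) with ‖φ(σ) − φ(τ)‖_∞ = d_Δ(σ,τ) for all σ, τ ∈ Δ_k. -/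
open Set
open scoped Finset symmDiff

section ClopenSign

variable {X : Type*} [TopologicalSpace X]

open scoped Classical in
noncomputable def clopenSign {U : Set X} (hU : IsClopen U) : C(X, ℝ) :=
  ⟨fun x => if x ∈ U then -1 else 1,
    Continuous.if (by simp [hU.frontier_eq]) continuous_const continuous_const⟩

theorem clopenSign_apply_of_mem {U : Set X} (hU : IsClopen U) {x : X} (hx : x ∈ U) :
    clopenSign hU x = -1 :=
  if_pos hx

theorem clopenSign_apply_of_notMem {U : Set X} (hU : IsClopen U) {x : X} (hx : x ∉ U) :
    clopenSign hU x = 1 :=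
  if_neg hx

variable [CompactSpace X]

theorem norm_clopenSign_le {U : Set X} (hU : IsClopen U) : ‖clopenSign hU‖ ≤ 1 :=
  (ContinuousMap.norm_le _ zero_le_one).2 fun x => by
    by_cases hx : x ∈ U
    · simp [clopenSign_apply_of_mem hU hx]
    · simp [clopenSign_apply_of_notMem hU hx]

theorem norm_sum_clopenSign_sub_sum_clopenSign {ι : Type*} [DecidableEq ι] {U : ι → Set X}
    (hU : ∀ i, IsClopen (U i)) (σ τ : Finset ι) {x : X} (hx : ∀ i, x ∈ U i ↔ i ∈ τ) :
    ‖∑ i ∈ σ, clopenSign (hU i) - ∑ i ∈ τ, clopenSign (hU i)‖ = #(σ ∆ τ) := by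
  have hcard : #(σ ∆ τ) = #(σ \ τ) + #(τ \ σ) := by
    rw [symmDiff_def, Finset.sup_eq_union, Finset.card_union_of_disjoint disjoint_sdiff_sdiff]
  rw [← Finset.sum_sdiff_sub_sum_sdiff, hcard, Nat.cast_add]
  refine le_antisymm ?_ ?_
  · refine (norm_sub_le _ _).trans (add_le_add ?_ ?_) <;>
      simpa using norm_sum_le_of_le _ fun i _ => norm_clopenSign_le (hU i)
  · have hσ : ∀ i ∈ σ \ τ, clopenSign (hU i) x = 1 := fun i hi =>
      clopenSign_apply_of_notMem _ ((hx i).not.2 (Finset.mem_sdiff.1 hi).2)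
    have hτ : ∀ i ∈ τ \ σ, clopenSign (hU i) x = -1 := fun i hi =>
      clopenSign_apply_of_mem _ ((hx i).2 (Finset.mem_sdiff.1 hi).1)
    refine le_trans (le_of_eq ?_) (ContinuousMap.norm_coe_le_norm _ x)
    rw [ContinuousMap.sub_apply, ContinuousMap.sum_apply, ContinuousMap.sum_apply,
      Finset.sum_congr rfl hσ, Finset.sum_congr rfl hτ]
    simp only [Finset.sum_const, nsmul_eq_mul, mul_one, mul_neg, sub_neg_eq_add, Real.norm_eq_abs]
    exact (abs_of_nonneg (by positivity)).symm

end ClopenSign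

def RealizesUpTo {α : Type*} (V : ℕ → Set α) (s : Set α) (k : ℕ) : Prop :=
  ∀ τ : Finset ℕ, #τ ≤ k → ∃ p ∈ s, ∀ n, p ∈ V n ↔ n ∈ τ

theorem isClopen_Ioc_of_succOrder {α : Type*} [LinearOrder α] [TopologicalSpace α]
    [OrderTopology α] [SuccOrder α] [NoMaxOrder α] (a b : α) : IsClopen (Ioc a b) := by
  constructor
  · rw [← Ioi_inter_Iic, ← Order.Ici_succ]
    exact isClosed_Ici.inter isClosed_Iic
  · rw [← Ioi_inter_Iic, ← Order.Iio_succ]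
    exact isOpen_Ioi.inter isOpen_Iio

namespace Ordinal

theorem continuous_sub_const (c : Ordinal) : Continuous (· - c) := by
  let g : Ici c ≃o Ordinal := StrictMono.orderIsoOfSurjective (fun x => x.1 - c)
    (fun x y hxy => by
      rw [lt_sub, Ordinal.add_sub_cancel_of_le x.2]
      exact hxy)
    (fun β => ⟨⟨c + β, mem_Ici.2 le_self_add⟩, Ordinal.add_sub_cancel c β⟩)
  have hg : (· - c) = g ∘ fun α => ⟨max c α, le_max_left c α⟩ := by
    funext α
    show α - c = max c α - c
    rcases le_total α c with h | h
    · rw [max_eq_left h, Ordinal.sub_self, Ordinal.sub_eq_zero_iff_le.2 h]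
    · rw [max_eq_right h]
  rw [hg]
  exact g.continuous.comp ((continuous_const.max continuous_id).subtype_mk _)

def block (e : Ordinal) (m : ℕ) : Set Ordinal := Ioc (e * m) (e * ↑(m + 1))

def mulOmegaFamily (e : Ordinal) (V : ℕ → Set Ordinal) (n : ℕ) : Set Ordinal :=
  block e n ∪ ⋃ m ∈ Finset.range n, block e m ∩ (· - e * m) ⁻¹' V n

variable {e q : Ordinal}

theorem add_mem_block (m : ℕ) (hq : q ∈ Ioc 0 e) : e * m + q ∈ block e m := by
  refine ⟨lt_add_of_pos_right _ hq.1, ?_⟩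
  rw [Nat.cast_succ, mul_add_one]
  exact add_le_add_right hq.2 _

theorem eq_of_add_mem_block {m b : ℕ} (hq : q ∈ Ioc 0 e) (h : e * b + q ∈ block e m) : m = b := by
  by_contra hmb
  have hmono : Monotone fun n : ℕ => e * n := fun _ _ hle => by dsimp only; gcongr
  exact Set.disjoint_left.1 (hmono.pairwise_disjoint_on_Ioc_succ hmb) h (add_mem_block b hq)

theorem mem_mulOmegaFamily_iff {V : ℕ → Set Ordinal} {b n : ℕ} (hq : q ∈ Ioc 0 e) :
    e * b + q ∈ mulOmegaFamily e V n ↔ n = b ∨ b < n ∧ q ∈ V n := by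
  simp only [mulOmegaFamily, mem_union, mem_iUnion, mem_inter_iff, mem_preimage, Finset.mem_range]
  constructor
  · rintro (h | ⟨m, hmn, hm, hqV⟩)
    · exact Or.inl (eq_of_add_mem_block hq h)
    · obtain rfl := eq_of_add_mem_block hq hm
      rw [Ordinal.add_sub_cancel] at hqV
      exact Or.inr ⟨hmn, hqV⟩
  · rintro (rfl | ⟨hbn, hqV⟩)
    · exact Or.inl (add_mem_block n hq)
    · exact Or.inr ⟨b, hbn, add_mem_block b hq, by rwa [Ordinal.add_sub_cancel]⟩

theorem mulOmegaFamily_subset_Iic (V : ℕ → Set Ordinal) (n : ℕ) :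
    mulOmegaFamily e V n ⊆ Iic (e * ↑(n + 1)) := by
  have hblock : ∀ m ≤ n, block e m ⊆ Iic (e * ↑(n + 1)) := fun m hm x hx =>
    hx.2.trans (by gcongr)
  refine union_subset (hblock n le_rfl) (iUnion₂_subset fun m hm => ?_)
  exact inter_subset_left.trans (hblock m (Finset.mem_range.1 hm).le)

theorem isClopen_mulOmegaFamily {V : ℕ → Set Ordinal} (hV : ∀ n, IsClopen (V n)) (n : ℕ) :
    IsClopen (mulOmegaFamily e V n) :=
  (isClopen_Ioc_of_succOrder _ _).union <| isClopen_biUnion_finset fun _ _ =>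
    (isClopen_Ioc_of_succOrder _ _).inter <| (hV n).preimage (continuous_sub_const _)

theorem realizesUpTo_mulOmegaFamily {V : ℕ → Set Ordinal} {k : ℕ} (he : 0 < e)
    (hV : RealizesUpTo V (Ioc 0 e) k) :
    RealizesUpTo (mulOmegaFamily e V) (Ioc 0 (e * ω)) (k + 1) := by
  intro τ hτ
  rcases τ.eq_empty_or_nonempty with rfl | hne
  · refine ⟨e * ω, ⟨mul_pos he omega0_pos, le_rfl⟩, fun n => iff_of_false (fun h => ?_) (by simp)⟩
    have hlt : e * ↑(n + 1) < e * ω := by gcongr; exact natCast_lt_omega0 _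
    exact (mem_Iic.1 (mulOmegaFamily_subset_Iic V n h)).not_gt hlt
  set b := τ.min' hne
  obtain ⟨q, hq, hqV⟩ := hV (τ.erase b) (by rw [Finset.card_erase_of_mem (τ.min'_mem hne)]; omega)
  refine ⟨e * b + q, ⟨hq.1.trans_le le_add_self, (add_mem_block b hq).2.trans ?_⟩, fun n => ?_⟩
  · gcongr; exact (natCast_lt_omega0 _).le
  rw [mem_mulOmegaFamily_iff hq, hqV, Finset.mem_erase]
  constructor
  · rintro (rfl | ⟨-, -, hn⟩)
    exacts [τ.min'_mem hne, hn]
  · intro hn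
    rcases (τ.min'_le n hn).eq_or_lt with h | h
    exacts [Or.inl h.symm, Or.inr ⟨h, h.ne', hn⟩]

theorem exists_isClopen_realizesUpTo_omega0_opow (k : ℕ) :
    ∃ V : ℕ → Set Ordinal,
      (∀ n, IsClopen (V n)) ∧ RealizesUpTo V (Ioc 0 (ω ^ (k : Ordinal))) k := by
  induction k with
  | zero =>
    refine ⟨fun _ => ∅, fun _ => isClopen_empty, fun τ hτ => ⟨1, by simp, fun n => ?_⟩⟩
    simp [Finset.card_eq_zero.1 (Nat.le_zero.1 hτ)]
  | succ k ih =>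
    obtain ⟨V, hVc, hV⟩ := ih
    refine ⟨mulOmegaFamily (ω ^ (k : Ordinal)) V, isClopen_mulOmegaFamily hVc, ?_⟩
    rw [Nat.cast_succ, opow_add, opow_one]
    exact realizesUpTo_mulOmegaFamily (opow_pos _ omega0_pos) hV

end Ordinal

theorem deltaK_isometric_C_omega_pow_k_general (k : ℕ) :
    ∃ φ : {σ : Finset ℕ // σ.card ≤ k} → C(↥(Set.Iic (Ordinal.omega0 ^ (k : Ordinal))), ℝ),
      ∀ σ τ : {σ : Finset ℕ // σ.card ≤ k},
        ‖φ σ - φ τ‖ = ((symmDiff σ.1 τ.1).card : ℝ) := by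
  obtain ⟨V, hV_clopen, hV⟩ := Ordinal.exists_isClopen_realizesUpTo_omega0_opow k
  have hU (n : ℕ) : IsClopen (Subtype.val ⁻¹' V n : Set (Iic (Ordinal.omega0 ^ (k : Ordinal)))) :=
    (hV_clopen n).preimage continuous_subtype_val
  refine ⟨fun σ => ∑ n ∈ σ.1, clopenSign (hU n), fun σ τ => ?_⟩
  obtain ⟨p, hp, hpτ⟩ := hV τ.1 τ.2
  exact norm_sum_clopenSign_sub_sum_clopenSign hU σ.1 τ.1 (x := ⟨p, hp.2⟩) hpτ

/-- For every integer `k ≥ 1` the metric space `Δ_k` embeds isometrically into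
`C([0, ω^k])`. -/
theorem deltaK_isometric_C_omega_pow_k (k : ℕ) (hk : 1 ≤ k) :
    ∃ φ : {σ : Finset ℕ // σ.card ≤ k} → C(↥(Set.Iic (Ordinal.omega0 ^ (k : Ordinal))), ℝ),
      ∀ σ τ : {σ : Finset ℕ // σ.card ≤ k},
        ‖φ σ - φ τ‖ = ((symmDiff σ.1 τ.1).card : ℝ) :=
  deltaK_isometric_C_omega_pow_k_general k
end

section
/- For every ε > 0 there exists a map φ : Δ_∞ → C([0, ω^ω]) such that (1 − ε)·d_Δ(σ,τ) ≤ ‖φ(σ) − φ(τ)‖_∞ ≤ d_Δ(σ,τ) for all σ, τ ∈ Δ_∞; that is, the infinite Hamming cube Δ_∞ embeds almost isometrically into C([0, ω^ω]). -/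
open Ordinal

theorem norm_sum_sub_sum_le_card_symmDiff {ι E : Type*} [DecidableEq ι] [SeminormedAddCommGroup E]
    {f : ι → E} (hf : ∀ i, ‖f i‖ ≤ 1) (σ τ : Finset ι) :
    ‖∑ i ∈ σ, f i - ∑ i ∈ τ, f i‖ ≤ (symmDiff σ τ).card := by
  have hsum : ∀ s : Finset ι, ‖∑ i ∈ s, f i‖ ≤ s.card := fun s =>
    (norm_sum_le _ _).trans (by simpa using Finset.sum_le_sum fun i _ => hf i)
  rw [← Finset.sum_sdiff_sub_sum_sdiff, symmDiff_def, Finset.sup_eq_union,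
    Finset.card_union_of_disjoint disjoint_sdiff_sdiff, Nat.cast_add]
  exact (norm_sub_le _ _).trans (add_le_add (hsum _) (hsum _))

def signPattern {ι : Type*} [DecidableEq ι] (G P : Finset ι) (i : ι) : ℤ :=
  if i ∈ G then if i ∈ P then 1 else -1 else 0

theorem signPattern_insert {ι : Type*} [DecidableEq ι] (a : ι) (G P : Finset ι) :
    signPattern (insert a G) P = Function.update (signPattern G P) a (if a ∈ P then 1 else -1) := by
  funext i
  rcases eq_or_ne i a with rfl | hi
  · simp [signPattern]
  · simp [signPattern, hi]

theorem sum_signPattern_sub_sum_signPattern {ι : Type*} [DecidableEq ι] {G σ τ : Finset ι}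
    (hG : G ⊆ symmDiff σ τ) :
    ∑ i ∈ σ, signPattern G σ i - ∑ i ∈ τ, signPattern G σ i = G.card := by
  have hστ : ∑ i ∈ σ \ τ, signPattern G σ i = ((σ \ τ).filter (· ∈ G)).card := by
    rw [← Finset.sum_boole]
    refine Finset.sum_congr rfl fun i hi => ?_
    simp [signPattern, (Finset.mem_sdiff.1 hi).1]
  have hτσ : ∑ i ∈ τ \ σ, signPattern G σ i = -((τ \ σ).filter (· ∈ G)).card := by
    rw [← Finset.sum_boole, ← Finset.sum_neg_distrib]
    refine Finset.sum_congr rfl fun i hi => ?_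
    simp only [signPattern, (Finset.mem_sdiff.1 hi).2, if_false]
    split_ifs <;> simp
  rw [← Finset.sum_sdiff_sub_sum_sdiff, hστ, hτσ, sub_neg_eq_add, ← Nat.cast_add,
    ← Finset.card_union_of_disjoint (disjoint_sdiff_sdiff.mono (Finset.filter_subset _ _)
      (Finset.filter_subset _ _)), ← Finset.filter_union, ← Finset.sup_eq_union, ← symmDiff_def,
    Finset.filter_mem_eq_inter, Finset.inter_eq_right.2 hG]

theorem card_le_norm_sum_sub_sum {ι K : Type*} [DecidableEq ι] [TopologicalSpace K]
    [CompactSpace K] (f : ι → C(K, ℝ)) {G σ τ : Finset ι} (hG : G ⊆ symmDiff σ τ) (x : K)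
    (hx : ∀ i, f i x = signPattern G σ i) :
    (G.card : ℝ) ≤ ‖∑ i ∈ σ, f i - ∑ i ∈ τ, f i‖ := by
  have hval : (∑ i ∈ σ, f i - ∑ i ∈ τ, f i) x = G.card := by
    simp only [ContinuousMap.sub_apply, ContinuousMap.coe_sum, Finset.sum_apply, hx]
    exact_mod_cast sum_signPattern_sub_sum_signPattern hG
  calc (G.card : ℝ) = ‖(∑ i ∈ σ, f i - ∑ i ∈ τ, f i) x‖ := by rw [hval, Real.norm_natCast]
    _ ≤ _ := ContinuousMap.norm_coe_le_norm _ x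

theorem one_sub_mul_card_le_card_filter {ε : ℝ} (hε : 0 < ε) {C : ℕ} (hC : 1 / ε ≤ C)
    (F : Finset ℕ) : (1 - ε) * F.card ≤ (F.filter fun i => F.card ≤ C * (i + 1)).card := by
  have hC₀ : 0 < C := by exact_mod_cast (one_div_pos.2 hε).trans_le hC
  have hsmall : (F.filter fun i => ¬ F.card ≤ C * (i + 1)) ⊆ Finset.range (F.card / C) := by
    intro i hi
    rw [Finset.mem_filter, not_le] at hi
    rw [Finset.mem_range, Nat.lt_iff_add_one_le, Nat.le_div_iff_mul_le hC₀, mul_comm]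
    exact hi.2.le
  have hcount := Finset.card_filter_add_card_filter_not (s := F) fun i => F.card ≤ C * (i + 1)
  have hdiv : ((F.card / C : ℕ) : ℝ) ≤ ε * F.card := by
    refine Nat.cast_div_le.trans ?_
    rw [div_le_iff₀ (by exact_mod_cast hC₀)]
    rw [div_le_iff₀ hε] at hC
    nlinarith [(Nat.cast_nonneg F.card : (0 : ℝ) ≤ F.card)]
  have hlost := Finset.card_le_card hsmall
  rw [Finset.card_range] at hlost
  have hsplit :
      (F.card : ℝ) ≤ (F.filter fun i => F.card ≤ C * (i + 1)).card + (F.card / C : ℕ) := by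
    exact_mod_cast (by omega)
  linarith

def LeftStableOn {α : Type*} (f : Ordinal → α) (top : Ordinal) : Prop :=
  ∀ x, 0 < x → x ≤ top → ∃ a < x, ∀ y, a < y → y ≤ x → f y = f x

theorem LeftStableOn.continuousOn {α : Type*} [TopologicalSpace α] {f : Ordinal → α}
    {top : Ordinal} (h : LeftStableOn f top) : ContinuousOn f (Set.Iic top) := by
  intro x hx
  refine ContinuousAt.continuousWithinAt (Filter.EventuallyEq.continuousAt (y := f x) ?_)
  rcases eq_zero_or_pos x with rfl | hx₀
  · filter_upwards [(isOpen_Iio (a := (1 : Ordinal))).mem_nhds (by simp)] with y hy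
    rw [Order.lt_one_iff.1 (Set.mem_Iio.1 hy)]
  · obtain ⟨a, hax, ha⟩ := h x hx₀ hx
    filter_upwards [isOpen_Ioo.mem_nhds ⟨hax, Order.lt_succ x⟩] with y hy
    exact ha y hy.1 (Order.lt_succ_iff.1 hy.2)

theorem leftStableOn_const {α : Type*} (c : α) (top : Ordinal) :
    LeftStableOn (fun _ => c) top :=
  fun _ hx _ => ⟨0, hx, fun _ _ _ => rfl⟩

noncomputable section Blocks

variable (b : ℕ → Ordinal)

def blockStart : ℕ → Ordinal
  | 0 => 0
  | j + 1 => blockStart j + b j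

theorem blockStart_mono : Monotone (blockStart b) :=
  monotone_nat_of_le_succ fun _ => le_self_add

def blockIndex (z : Ordinal) : ℕ :=
  sInf {j | z ≤ blockStart b (j + 1)}

variable {b}

theorem blockIndex_eq {z : Ordinal} {j : ℕ} (h₁ : blockStart b j < z)
    (h₂ : z ≤ blockStart b (j + 1)) : blockIndex b z = j := by
  refine le_antisymm (Nat.sInf_le h₂) (not_lt.1 fun hlt => h₁.not_ge ?_)
  exact (Nat.sInf_mem (s := {j | z ≤ blockStart b (j + 1)}) ⟨j, h₂⟩).trans
    (blockStart_mono b hlt)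

theorem blockIndex_spec {z : Ordinal} (hz : 0 < z) (h : ∃ j, z ≤ blockStart b j) :
    blockStart b (blockIndex b z) < z ∧ z ≤ blockStart b (blockIndex b z + 1) := by
  obtain ⟨j, hj⟩ := h
  have hne : {j | z ≤ blockStart b (j + 1)}.Nonempty := by
    rcases j with _ | j
    · exact absurd hz hj.not_gt
    · exact ⟨j, hj⟩
  refine ⟨?_, Nat.sInf_mem hne⟩
  rcases hk : blockIndex b z with _ | k
  · exact hz
  · have : k ∉ {j | z ≤ blockStart b (j + 1)} :=
      Nat.notMem_of_lt_sInf (by simp only [blockIndex] at hk; omega)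
    exact not_le.1 this

theorem blockStart_const (c : Ordinal) (j : ℕ) : blockStart (fun _ => c) j = c * j := by
  induction j with
  | zero => simp [blockStart]
  | succ j ih => rw [blockStart, ih, Nat.cast_succ, mul_add_one]

end Blocks

noncomputable section Level

variable {α : Type*} [Zero α] (b : ℕ → Ordinal) (top : Ordinal) (g : ℕ → Ordinal → α)

def levelDecode (z : Ordinal) : α :=
  if z = top then 0 else g (blockIndex b z) (z - blockStart b (blockIndex b z))

variable {b top g}

theorem levelDecode_top : levelDecode b top g top = 0 := if_pos rfl

theorem levelDecode_of_mem_block (hlt : ∀ j, blockStart b j < top) {z : Ordinal} {j : ℕ}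
    (h₁ : blockStart b j < z) (h₂ : z ≤ blockStart b (j + 1)) :
    levelDecode b top g z = g j (z - blockStart b j) := by
  rw [levelDecode, if_neg (h₂.trans_lt (hlt _)).ne, blockIndex_eq h₁ h₂]

theorem levelDecode_blockStart_add (hlt : ∀ j, blockStart b j < top) {j : ℕ} {z : Ordinal}
    (hz₀ : 0 < z) (hz : z ≤ b j) : levelDecode b top g (blockStart b j + z) = g j z := by
  rw [levelDecode_of_mem_block hlt (by simpa using hz₀) (add_le_add_right hz _),
    Ordinal.add_sub_cancel]

theorem levelDecode_apply {β : Type*} (g : ℕ → Ordinal → β → α) (z : Ordinal) (i : β) :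
    levelDecode b top g z i = levelDecode b top (fun j y => g j y i) z := by
  unfold levelDecode
  split_ifs <;> rfl

theorem leftStableOn_levelDecode (hlt : ∀ j, blockStart b j < top)
    (hcof : ∀ z < top, ∃ j, z ≤ blockStart b j) (hg : ∀ j, LeftStableOn (g j) (b j))
    (hfar : ∀ᶠ j in Filter.atTop, ∀ y, g j y = 0) :
    LeftStableOn (levelDecode b top g) top := by
  intro x hx₀ hx
  rcases hx.eq_or_lt with rfl | hxtop
  · obtain ⟨J, hJ⟩ := Filter.eventually_atTop.1 hfar
    refine ⟨blockStart b J, hlt J, fun y hJy hy => ?_⟩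
    rcases hy.eq_or_lt with rfl | hytop
    · rfl
    obtain ⟨h₁, h₂⟩ := blockIndex_spec (pos_of_gt hJy) (hcof y hytop)
    have hJ_le : J ≤ blockIndex b y := by
      by_contra! hlt'
      exact (h₂.trans (blockStart_mono b hlt')).not_gt hJy
    rw [levelDecode_of_mem_block hlt h₁ h₂, hJ _ hJ_le, levelDecode_top]
  · obtain ⟨h₁, h₂⟩ := blockIndex_spec hx₀ (hcof x hxtop)
    set j := blockIndex b x
    set s := blockStart b j
    obtain ⟨a, has, ha⟩ := hg j (x - s) (Ordinal.lt_sub.2 (by simpa using h₁))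
      (Ordinal.sub_le.2 h₂)
    refine ⟨s + a, by simpa using Ordinal.lt_sub.1 has, fun y hay hyx => ?_⟩
    have hsy : s < y := (le_self_add).trans_lt hay
    rw [levelDecode_of_mem_block hlt hsy (hyx.trans h₂), levelDecode_of_mem_block hlt h₁ h₂]
    refine ha _ (Ordinal.lt_sub.2 hay) (Ordinal.sub_le.2 ?_)
    rwa [Ordinal.add_sub_cancel_of_le h₁.le]

end Level

noncomputable section Decoding

def childDecode (d : ℕ → Ordinal → ℕ → ℤ) (n j : ℕ) (y : Ordinal) : ℕ → ℤ :=
  Function.update (d (n + j / 2 + 1) y) (n + j / 2) ((-1) ^ j)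

def treeDecode : ℕ → ℕ → Ordinal → ℕ → ℤ
  | 0 => fun _ _ _ => 0
  | s + 1 => fun n => levelDecode (fun _ => ω ^ s) (ω ^ (s + 1)) (childDecode (treeDecode s) n)

-- Room for the `C (e + 1) - 1` further elements of a signed set whose least element `e` is
-- written by root block `j ∈ {2e, 2e + 1}`.
def rootHeight (C j : ℕ) : ℕ := C * (j / 2 + 1) - 1

def decode (C : ℕ) : Ordinal → ℕ → ℤ :=
  levelDecode (fun j => ω ^ rootHeight C j) (ω ^ ω)
    fun j => childDecode (treeDecode (rootHeight C j)) 0 j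

def blockOf (P : Finset ℕ) (n a : ℕ) : ℕ := 2 * (a - n) + if a ∈ P then 0 else 1

theorem childDecode_blockOf {d : ℕ → Ordinal → ℕ → ℤ} {G P : Finset ℕ} {n a : ℕ} (ha : n ≤ a)
    {y : Ordinal} (hd : d (a + 1) y = signPattern G P) :
    childDecode d n (blockOf P n a) y = signPattern (insert a G) P := by
  have hhalf : n + blockOf P n a / 2 = a := by unfold blockOf; split_ifs <;> omega
  have hsign : ((-1 : ℤ)) ^ blockOf P n a = if a ∈ P then 1 else -1 := by
    unfold blockOf; split_ifs <;> simp [pow_add, pow_mul]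
  rw [childDecode, hhalf, hsign, hd, signPattern_insert]

theorem childDecode_apply_eq_zero {d : ℕ → Ordinal → ℕ → ℤ} {i : ℕ}
    (hd : ∀ m y, i < m → d m y i = 0) {n j : ℕ} (hj : i < n + j / 2) (y : Ordinal) :
    childDecode d n j y i = 0 := by
  rw [childDecode, Function.update_of_ne hj.ne, hd _ _ (by omega)]

theorem abs_childDecode_le_one {d : ℕ → Ordinal → ℕ → ℤ} (hd : ∀ m y i, |d m y i| ≤ 1)
    (n j : ℕ) (y : Ordinal) (i : ℕ) : |childDecode d n j y i| ≤ 1 := by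
  rw [childDecode, Function.update_apply]
  split_ifs
  · simp
  · exact hd _ _ _

theorem leftStableOn_childDecode {d : ℕ → Ordinal → ℕ → ℤ} {top : Ordinal} {i : ℕ}
    (hd : ∀ m, LeftStableOn (fun y => d m y i) top) (n j : ℕ) :
    LeftStableOn (fun y => childDecode d n j y i) top := by
  simp only [childDecode, Function.update_apply]
  split_ifs
  · exact leftStableOn_const _ top
  · exact hd _

theorem treeDecode_succ (s n : ℕ) :
    treeDecode (s + 1) n =
      levelDecode (fun _ => ω ^ s) (ω ^ (s + 1)) (childDecode (treeDecode s) n) := rfl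

theorem blockStart_const_lt_omega0_pow_succ (s j : ℕ) :
    blockStart (fun _ => ω ^ s) j < ω ^ (s + 1) := by
  rw [blockStart_const, pow_succ]
  exact mul_lt_mul_of_pos_left (natCast_lt_omega0 j) (pow_pos omega0_pos s)

theorem exists_le_blockStart_const_of_lt (s : ℕ) :
    ∀ z < ω ^ (s + 1), ∃ j, z ≤ blockStart (fun _ => ω ^ s) j := by
  intro z hz
  rw [pow_succ, Ordinal.lt_mul_iff_of_isSuccLimit isSuccLimit_omega0] at hz
  obtain ⟨c, hc, hzc⟩ := hz
  obtain ⟨j, rfl⟩ := Ordinal.lt_omega0.1 hc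
  exact ⟨j, by rw [blockStart_const]; exact hzc.le⟩

theorem treeDecode_apply_eq_zero : ∀ (s n : ℕ) (z : Ordinal) (i : ℕ), i < n →
    treeDecode s n z i = 0
  | 0, _, _, _, _ => rfl
  | s + 1, n, z, i, hi => by
    rw [treeDecode_succ, levelDecode_apply, levelDecode]
    split_ifs
    · rfl
    · exact childDecode_apply_eq_zero
        (fun m y him => treeDecode_apply_eq_zero s m y i him) (by omega) _

theorem abs_treeDecode_le_one : ∀ (s n : ℕ) (z : Ordinal) (i : ℕ), |treeDecode s n z i| ≤ 1
  | 0, _, _, _ => by simp [treeDecode]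
  | s + 1, n, z, i => by
    rw [treeDecode_succ, levelDecode_apply, levelDecode]
    split_ifs
    · simp
    · exact abs_childDecode_le_one (abs_treeDecode_le_one s) _ _ _ _

theorem leftStableOn_treeDecode : ∀ (s n i : ℕ),
    LeftStableOn (fun z => treeDecode s n z i) (ω ^ s)
  | 0, _, _ => leftStableOn_const 0 _
  | s + 1, n, i => by
    simp only [treeDecode_succ, levelDecode_apply]
    refine leftStableOn_levelDecode (blockStart_const_lt_omega0_pow_succ s)
      (exists_le_blockStart_const_of_lt s)
      (fun j => leftStableOn_childDecode (fun m => leftStableOn_treeDecode s m i) n j) ?_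
    filter_upwards [Filter.eventually_ge_atTop (2 * i + 2)] with j hj y
    exact childDecode_apply_eq_zero
      (fun m y him => treeDecode_apply_eq_zero s m y i him) (by omega) y

theorem exists_treeDecode_eq_signPattern (P G : Finset ℕ) :
    ∀ s n, G.card ≤ s → (∀ i ∈ G, n ≤ i) →
      ∃ z, 0 < z ∧ z ≤ ω ^ s ∧ treeDecode s n z = signPattern G P := by
  induction G using Finset.induction_on_min with
  | empty =>
    intro s n _ _
    refine ⟨ω ^ s, pow_pos omega0_pos s, le_rfl, ?_⟩
    cases s with
    | zero => rfl
    | succ s => exact levelDecode_top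
  | insert a G haG ih =>
    intro s n hcard hn
    have ha : a ∉ G := fun h => (haG a h).false
    rw [Finset.card_insert_of_notMem ha] at hcard
    obtain ⟨s, rfl⟩ : ∃ s', s = s' + 1 := ⟨s - 1, by omega⟩
    obtain ⟨z, hz₀, hz, hzG⟩ := ih s (a + 1) (by omega) haG
    have hle : blockStart (fun _ => ω ^ s) (blockOf P n a) + z ≤
        blockStart (fun _ => ω ^ s) (blockOf P n a + 1) := add_le_add_right hz _
    refine ⟨_, hz₀.trans_le le_add_self, hle.trans (blockStart_const_lt_omega0_pow_succ s _).le, ?_⟩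
    rw [treeDecode_succ, levelDecode_blockStart_add (blockStart_const_lt_omega0_pow_succ s) hz₀ hz]
    exact childDecode_blockOf (hn a (G.mem_insert_self a)) hzG

theorem omega0_pow_lt_omega0_opow_omega0 (n : ℕ) : ω ^ n < ω ^ ω := by
  rw [← opow_natCast]
  exact (opow_lt_opow_iff_right one_lt_omega0).2 (natCast_lt_omega0 n)

theorem blockStart_rootHeight_lt_omega0_opow_omega0 (C j : ℕ) :
    blockStart (fun j => ω ^ rootHeight C j) j < ω ^ ω := by
  induction j with
  | zero => exact opow_pos _ omega0_pos
  | succ j ih => exact isPrincipal_add_omega0_opow ω ih (omega0_pow_lt_omega0_opow_omega0 _)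

theorem exists_le_blockStart_rootHeight_of_lt {C : ℕ} (hC : 0 < C) :
    ∀ z < ω ^ ω, ∃ j, z ≤ blockStart (fun j => ω ^ rootHeight C j) j := by
  intro z hz
  obtain ⟨c, hc, hzc⟩ := (lt_opow_of_isSuccLimit omega0_ne_zero isSuccLimit_omega0).1 hz
  obtain ⟨n, rfl⟩ := Ordinal.lt_omega0.1 hc
  have hn : n ≤ rootHeight C (2 * n) := by
    have := Nat.le_mul_of_pos_left (n + 1) hC
    rw [rootHeight, Nat.mul_div_cancel_left n two_pos]
    omega
  refine ⟨2 * n + 1, hzc.le.trans ?_⟩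
  rw [opow_natCast]
  exact (pow_le_pow_right₀ one_lt_omega0.le hn).trans le_add_self

theorem abs_decode_le_one (C : ℕ) (x : Ordinal) (i : ℕ) : |decode C x i| ≤ 1 := by
  rw [decode, levelDecode_apply, levelDecode]
  split_ifs
  · simp
  · exact abs_childDecode_le_one (abs_treeDecode_le_one _) _ _ _ _

theorem leftStableOn_decode {C : ℕ} (hC : 0 < C) (i : ℕ) :
    LeftStableOn (fun x => decode C x i) (ω ^ ω) := by
  simp only [decode, levelDecode_apply]
  refine leftStableOn_levelDecode (blockStart_rootHeight_lt_omega0_opow_omega0 C)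
    (exists_le_blockStart_rootHeight_of_lt hC)
    (fun j => leftStableOn_childDecode (fun m => leftStableOn_treeDecode _ m i) 0 j) ?_
  filter_upwards [Filter.eventually_ge_atTop (2 * i + 2)] with j hj y
  exact childDecode_apply_eq_zero
    (fun m y him => treeDecode_apply_eq_zero _ m y i him) (by omega) y

theorem exists_decode_eq_signPattern {C : ℕ} (G P : Finset ℕ)
    (hG : ∀ i ∈ G, G.card ≤ C * (i + 1)) : ∃ x ≤ ω ^ ω, decode C x = signPattern G P := by
  rcases G.eq_empty_or_nonempty with rfl | hne
  · exact ⟨ω ^ ω, le_rfl, levelDecode_top⟩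
  set a := G.min' hne
  have hGa : insert a (G.erase a) = G := Finset.insert_erase (G.min'_mem hne)
  have hcard : (G.erase a).card ≤ rootHeight C (blockOf P 0 a) := by
    have hhalf : blockOf P 0 a / 2 = a := by unfold blockOf; split_ifs <;> omega
    rw [Finset.card_erase_of_mem (G.min'_mem hne), rootHeight, hhalf]
    exact Nat.sub_le_sub_right (hG a (G.min'_mem hne)) 1
  obtain ⟨z, hz₀, hz, hzG⟩ := exists_treeDecode_eq_signPattern P (G.erase a) _ (a + 1) hcard
    fun i hi => G.min'_lt_of_mem_erase_min' hne hi
  have hlt := blockStart_rootHeight_lt_omega0_opow_omega0 C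
  refine ⟨_, (hlt (blockOf P 0 a + 1)).le.trans' (add_le_add_right hz _), ?_⟩
  rw [decode, levelDecode_blockStart_add hlt hz₀ hz, ← hGa]
  exact childDecode_blockOf (Nat.zero_le a) hzG

def decodeCoord {C : ℕ} (hC : 0 < C) (i : ℕ) : C(Set.Iic (ω ^ ω : Ordinal), ℝ) where
  toFun p := decode C p.1 i
  continuous_toFun :=
    (continuous_of_discreteTopology.comp_continuousOn
      (leftStableOn_decode hC i).continuousOn).domRestrict

theorem decodeCoord_apply {C : ℕ} (hC : 0 < C) (i : ℕ) (p : Set.Iic (ω ^ ω : Ordinal)) :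
    decodeCoord hC i p = decode C p.1 i := rfl

theorem norm_decodeCoord_le {C : ℕ} (hC : 0 < C) (i : ℕ) : ‖decodeCoord hC i‖ ≤ 1 :=
  (ContinuousMap.norm_le _ zero_le_one).2 fun p => by
    rw [decodeCoord_apply, Real.norm_eq_abs]
    exact_mod_cast abs_decode_le_one C p.1 i

end Decoding

/-- The infinite Hamming cube `Δ_∞` (finite subsets of `ℕ` with the symmetric difference
metric) embeds almost isometrically into `C([0, ω^ω])`. -/
theorem hammingCube_almost_isometric_C_omega_pow_omega :
    ∀ ε : ℝ, 0 < ε →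
      ∃ φ : Finset ℕ → C(↥(Set.Iic (Ordinal.omega0 ^ Ordinal.omega0)), ℝ),
        ∀ σ τ : Finset ℕ,
          (1 - ε) * ((symmDiff σ τ).card : ℝ) ≤ ‖φ σ - φ τ‖ ∧
            ‖φ σ - φ τ‖ ≤ ((symmDiff σ τ).card : ℝ) := by
  intro ε hε
  have hC : 0 < ⌈1 / ε⌉₊ := Nat.ceil_pos.2 (one_div_pos.2 hε)
  refine ⟨fun σ => ∑ i ∈ σ, decodeCoord hC i, fun σ τ =>
    ⟨?_, norm_sum_sub_sum_le_card_symmDiff (norm_decodeCoord_le hC) σ τ⟩⟩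
  set F := symmDiff σ τ
  set G := F.filter fun i => F.card ≤ ⌈1 / ε⌉₊ * (i + 1)
  obtain ⟨x, hx, hxG⟩ := exists_decode_eq_signPattern G σ fun i hi =>
    (Finset.card_le_card (Finset.filter_subset _ F)).trans (Finset.mem_filter.1 hi).2
  calc (1 - ε) * (F.card : ℝ) ≤ G.card := one_sub_mul_card_le_card_filter hε (Nat.le_ceil _) F
    _ ≤ _ := card_le_norm_sum_sub_sum _ (Finset.filter_subset _ F) ⟨x, hx⟩ fun i => by
      rw [decodeCoord_apply, hxG]
end

section
/- There do not exist a constant C < 2 and a map f : Δ̃₂ → c₀ satisfying d_Δ(σ,τ) ≤ ‖f(σ) − f(τ)‖_∞ ≤ C·d_Δ(σ,τ) for all σ, τ ∈ Δ̃₂; in particular, the metric space Δ̃₂ does not embed into c₀ with distortion strictly less than 2. -/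
/-- The subset `Δ̃₂ = {∅} ∪ {{n} : n ≥ 1} ∪ {{1,i} : i ≥ 2} ∪ {{2,j} : j ≥ 3}` of `Δ₂`,
where the positive integers are `1, 2, 3, …`. -/
def DeltaTildeTwo : Type :=
  {σ : Finset ℕ // σ = ∅ ∨ (∃ n, 1 ≤ n ∧ σ = {n}) ∨ (∃ i, 2 ≤ i ∧ σ = {1, i}) ∨
    (∃ j, 3 ≤ j ∧ σ = {2, j})}

/-!
Put `x_n = f {n}`, `p_a = f {1, a}` and `q_b = f {2, b}`. For distinct `a, b ≥ 3` the points
`p_a` and `q_b` are at distance at least `4`, while `p_a` lies within `C` of both `x_1` and `x_a`,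
and `q_b` within `C` of both `x_2` and `x_b`. Since `x_1 - x_2 ∈ c₀`, the coordinates where
`x_1` and `x_2` differ by at least `ε` form a finite set `S`; the `x_a` are bounded, so by
compactness of bounded sets in `ℝ^S` two of them, `x_a` and `x_b`, are `ε`-close on `S`.
At each coordinate one of the routes `p_a, x_1, x_2, q_b` or `p_a, x_a, x_b, q_b` then has
length at most `2C + ε`, whence `4 ≤ 2C`.
-/

open Filter Metric Topology ZeroAtInfty Finset
open scoped symmDiff

namespace Finset

variable {α : Type*} [DecidableEq α]

theorem pair_symmDiff_singleton_left {a b : α} (h : a ≠ b) :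
    ({a, b} : Finset α) ∆ {a} = {b} := by
  ext
  simp only [mem_symmDiff, mem_insert, mem_singleton]
  grind

theorem pair_symmDiff_singleton_right {a b : α} (h : a ≠ b) :
    ({a, b} : Finset α) ∆ {b} = {a} := by
  rw [pair_comm, pair_symmDiff_singleton_left h.symm]

theorem card_pair_symmDiff_pair {a b c d : α} (hab : a ≠ b) (hcd : c ≠ d)
    (h : Disjoint ({a, b} : Finset α) {c, d}) : #(({a, b} : Finset α) ∆ {c, d}) = 4 := by
  rw [symmDiff_eq_union h, card_union_of_disjoint h, card_pair hab, card_pair hcd]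

end Finset

theorem Metric.exists_ne_dist_lt_of_isBounded_range {X : Type*} [PseudoMetricSpace X]
    [ProperSpace X] {u : ℕ → X} (hu : Bornology.IsBounded (Set.range u)) {ε : ℝ} (hε : 0 < ε) :
    ∃ a b, a ≠ b ∧ dist (u a) (u b) < ε := by
  obtain ⟨_, _, φ, hφ, hlim⟩ := tendsto_subseq_of_bounded hu (Set.mem_range_self (f := u))
  obtain ⟨N, hN⟩ := Metric.cauchySeq_iff.1 hlim.cauchySeq ε hε
  exact ⟨φ (N + 1), φ N, hφ.injective.ne N.succ_ne_self, hN (N + 1) N.le_succ N le_rfl⟩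

namespace ZeroAtInftyContinuousMap

variable {α β : Type*} [TopologicalSpace α] [MetricSpace β] [Zero β]

theorem dist_apply_le_dist (f g : C₀(α, β)) (x : α) : dist (f x) (g x) ≤ dist f g :=
  BoundedContinuousFunction.dist_coe_le_dist (f := f.toBCF) (g := g.toBCF) x

theorem dist_le {f g : C₀(α, β)} {C : ℝ} (hC : 0 ≤ C) :
    dist f g ≤ C ↔ ∀ x, dist (f x) (g x) ≤ C :=
  BoundedContinuousFunction.dist_le (f := f.toBCF) (g := g.toBCF) hC

theorem finite_setOf_le_dist [DiscreteTopology α] (f g : C₀(α, β)) {ε : ℝ} (hε : 0 < ε) :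
    {x | ε ≤ dist (f x) (g x)}.Finite := by
  have hlim : Tendsto (fun x => dist (f x) (g x)) (cocompact α) (𝓝 0) := by
    simpa using (zero_at_infty f).dist (zero_at_infty g)
  rw [cocompact_eq_cofinite] at hlim
  simpa using eventually_cofinite.1 (hlim.eventually (gt_mem_nhds hε))

theorem exists_ne_forall_mem_dist_lt [ProperSpace β] {y : ℕ → C₀(α, β)}
    (hy : Bornology.IsBounded (Set.range y)) (s : Finset α) {ε : ℝ} (hε : 0 < ε) :
    ∃ a b, a ≠ b ∧ ∀ x ∈ s, dist (y a x) (y b x) < ε := by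
  let restrict : C₀(α, β) → (s → β) := fun f x => f x
  have hrestrict : LipschitzWith 1 restrict := LipschitzWith.mk_one fun f g =>
    (dist_pi_le_iff dist_nonneg).2 fun x => dist_apply_le_dist f g x
  obtain ⟨a, b, hab, hdist⟩ := exists_ne_dist_lt_of_isBounded_range
    (u := restrict ∘ y) (by simpa [Set.range_comp] using hrestrict.isBounded_image hy) hε
  exact ⟨a, b, hab, fun x hx =>
    (dist_le_pi_dist (restrict (y a)) (restrict (y b)) ⟨x, hx⟩).trans_lt hdist⟩

theorem le_two_mul_of_forall_ne_le_dist [DiscreteTopology α] [ProperSpace β]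
    {x₁ x₂ : C₀(α, β)} {y p q : ℕ → C₀(α, β)} {C D : ℝ}
    (hpx : ∀ a, dist (p a) x₁ ≤ C) (hpy : ∀ a, dist (p a) (y a) ≤ C)
    (hqx : ∀ b, dist (q b) x₂ ≤ C) (hqy : ∀ b, dist (q b) (y b) ≤ C)
    (hpq : ∀ a b, a ≠ b → D ≤ dist (p a) (q b)) : D ≤ 2 * C := by
  by_contra! hCD
  set ε := (D - 2 * C) / 2 with hε_def
  have hε : 0 < ε := by linarith
  have hC : 0 ≤ C := dist_nonneg.trans (hpx 0)
  have hy : Bornology.IsBounded (Set.range y) :=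
    isBounded_closedBall.subset <| Set.range_subset_iff.2 fun a =>
      show dist (y a) x₁ ≤ 2 * C by linarith [dist_triangle_left (y a) x₁ (p a), hpx a, hpy a]
  obtain ⟨a, b, hab, hyab⟩ :=
    exists_ne_forall_mem_dist_lt hy (finite_setOf_le_dist x₁ x₂ hε).toFinset hε
  have hroute : ∀ u v : C₀(α, β), dist (p a) u ≤ C → dist (q b) v ≤ C → ∀ x,
      dist (u x) (v x) ≤ ε → dist (p a x) (q b x) ≤ 2 * C + ε := fun u v hu hv x huv => by
    linarith [dist_triangle4 (p a x) (u x) (v x) (q b x), dist_apply_le_dist (p a) u x,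
      dist_comm (v x) (q b x), dist_apply_le_dist (q b) v x]
  have hpq_le : dist (p a) (q b) ≤ 2 * C + ε := (dist_le (by positivity)).2 fun x => by
    by_cases hx : ε ≤ dist (x₁ x) (x₂ x)
    · exact hroute _ _ (hpy a) (hqy b) x (hyab x (by simpa using hx)).le
    · exact hroute _ _ (hpx a) (hqx b) x (not_le.1 hx).le
  linarith [hpq a b hab]

end ZeroAtInftyContinuousMap

namespace DeltaTildeTwo

def single (n : ℕ) (hn : 1 ≤ n) : DeltaTildeTwo := ⟨{n}, .inr (.inl ⟨n, hn, rfl⟩)⟩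

def pairOne (i : ℕ) (hi : 2 ≤ i) : DeltaTildeTwo := ⟨{1, i}, .inr (.inr (.inl ⟨i, hi, rfl⟩))⟩

def pairTwo (j : ℕ) (hj : 3 ≤ j) : DeltaTildeTwo := ⟨{2, j}, .inr (.inr (.inr ⟨j, hj, rfl⟩))⟩

@[simp] theorem val_single (n : ℕ) (hn : 1 ≤ n) : (single n hn).1 = {n} := rfl

@[simp] theorem val_pairOne (i : ℕ) (hi : 2 ≤ i) : (pairOne i hi).1 = {1, i} := rfl

@[simp] theorem val_pairTwo (j : ℕ) (hj : 3 ≤ j) : (pairTwo j hj).1 = {2, j} := rfl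

end DeltaTildeTwo

open DeltaTildeTwo in
/-- `Δ̃₂` does not embed into `c₀` (zero-at-infinity sequences with the sup norm) with
distortion strictly less than `2`. -/
theorem deltaTildeTwo_no_embedding_c0_distortion_lt_two :
    ¬ ∃ (C : ℝ) (f : DeltaTildeTwo → ZeroAtInftyContinuousMap ℕ ℝ), C < 2 ∧
      ∀ σ τ : DeltaTildeTwo,
        ((symmDiff σ.1 τ.1).card : ℝ) ≤ ‖f σ - f τ‖ ∧
          ‖f σ - f τ‖ ≤ C * ((symmDiff σ.1 τ.1).card : ℝ) := by
  rintro ⟨C, f, hC, hf⟩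
  have hdist_one {σ τ : DeltaTildeTwo} {n : ℕ} (h : σ.1 ∆ τ.1 = {n}) :
      dist (f σ) (f τ) ≤ C := by
    simpa [h, dist_eq_norm] using (hf σ τ).2
  have hdist_four (a b : ℕ) (hab : a ≠ b) :
      4 ≤ dist (f (pairOne (a + 3) (by omega))) (f (pairTwo (b + 3) (by omega))) := by
    have hcard := card_pair_symmDiff_pair (a := 1) (b := a + 3) (c := 2) (d := b + 3)
      (by omega) (by omega) (by simp [disjoint_insert_right]; omega)
    simpa [hcard, dist_eq_norm] using
      (hf (pairOne (a + 3) (by omega)) (pairTwo (b + 3) (by omega))).1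
  have := ZeroAtInftyContinuousMap.le_two_mul_of_forall_ne_le_dist
    (x₁ := f (single 1 le_rfl)) (x₂ := f (single 2 one_le_two))
    (y := fun n => f (single (n + 3) (by omega)))
    (fun a => hdist_one (pair_symmDiff_singleton_left (b := a + 3) (by omega)))
    (fun a => hdist_one (pair_symmDiff_singleton_right (a := 1) (by omega)))
    (fun b => hdist_one (pair_symmDiff_singleton_left (b := b + 3) (by omega)))
    (fun b => hdist_one (pair_symmDiff_singleton_right (a := 2) (by omega))) hdist_four
  linarith
end

section
/- There do not exist constants s > 0 and C < 2 and a map f : ℓ₁ → c₀ satisfying s·‖x − y‖₁ ≤ ‖f(x) − f(y)‖_∞ ≤ s·C·‖x − y‖₁ for all x, y ∈ ℓ₁; that is, every bi-Lipschitz embedding of ℓ₁ into c₀ has distortion at least 2. -/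
open Filter

noncomputable section EmbAux

namespace EmbAux

abbrev L : Type := lp (fun _ : ℕ => ℝ) 1

/-- basis vector `e i` in `ℓ₁`. -/
noncomputable def sing (i : ℕ) : L := lp.single 1 i (1 : ℝ)

lemma norm_sum (t : Finset ℕ) (c : ℕ → ℝ) :
    ‖(∑ i ∈ t, lp.single 1 i (c i) : L)‖ = ∑ i ∈ t, |c i| := by
  have h0 : (0:ℝ) < (1 : ENNReal).toReal := by norm_num
  have h := lp.norm_sum_single (E := fun _ : ℕ => ℝ) h0 c t
  simp only [ENNReal.toReal_one, Real.rpow_one, Real.norm_eq_abs] at h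
  exact h

lemma norm_sing (i : ℕ) : ‖sing i‖ = 1 := by
  have : sing i = ∑ j ∈ ({i} : Finset ℕ), lp.single 1 j ((fun _ => (1:ℝ)) j) := by
    rw [Finset.sum_singleton]; rfl
  rw [this, norm_sum]; simp

lemma norm_a : ‖sing 0 + sing 1‖ = 2 := by
  have : sing 0 + sing 1 = ∑ j ∈ ({0, 1} : Finset ℕ), lp.single 1 j ((fun _ => (1:ℝ)) j) := by
    rw [Finset.sum_insert (by simp), Finset.sum_singleton]; rfl
  rw [this, norm_sum]; simp

lemma norm_cross (m p : ℕ) (h : m ≠ p) :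
    ‖(sing 0 + sing 1 + sing (m+2)) - sing (p+2)‖ = 4 := by
  have hmem0 : (0:ℕ) ∉ ({1, m+2, p+2} : Finset ℕ) := by simp
  have hmem1 : (1:ℕ) ∉ ({m+2, p+2} : Finset ℕ) := by simp
  have hmem2 : (m+2:ℕ) ∉ ({p+2} : Finset ℕ) := by simp; omega
  have hc : (sing 0 + sing 1 + sing (m+2)) - sing (p+2)
      = ∑ i ∈ ({0, 1, m+2, p+2} : Finset ℕ),
          lp.single 1 i (if i = p+2 then (-1:ℝ) else 1) := by
    rw [show ({0, 1, m+2, p+2} : Finset ℕ)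
        = insert 0 (insert 1 (insert (m+2) ({p+2} : Finset ℕ))) from rfl,
      Finset.sum_insert hmem0, Finset.sum_insert hmem1, Finset.sum_insert hmem2,
      Finset.sum_singleton, if_neg (by omega : ¬ (0:ℕ) = p+2),
      if_neg (by omega : ¬ (1:ℕ) = p+2), if_neg (by omega : ¬ m+2 = p+2),
      if_pos rfl, show ((-1:ℝ)) = -(1:ℝ) from rfl, lp.single_neg]
    show _ = sing 0 + (sing 1 + (sing (m+2) + -sing (p+2)))
    unfold sing
    abel
  rw [hc, norm_sum, Finset.sum_insert hmem0, Finset.sum_insert hmem1,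
    Finset.sum_insert hmem2, Finset.sum_singleton,
    if_neg (by omega : ¬ (0:ℕ) = p+2), if_neg (by omega : ¬ (1:ℕ) = p+2),
    if_neg (by omega : ¬ m+2 = p+2), if_pos rfl]
  norm_num

lemma coord_abs_le (g h : ZeroAtInftyContinuousMap ℕ ℝ) (k : ℕ) :
    |g k - h k| ≤ ‖g - h‖ := by
  have h1 : ‖(g - h).toBCF k‖ ≤ ‖(g - h).toBCF‖ :=
    BoundedContinuousFunction.norm_coe_le_norm _ k
  rw [ZeroAtInftyContinuousMap.norm_toBCF_eq_norm] at h1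
  simpa [Real.norm_eq_abs] using h1

lemma exists_coord (g h : ZeroAtInftyContinuousMap ℕ ℝ) {b : ℝ} (hb : 0 ≤ b)
    (hlt : b < ‖g - h‖) : ∃ k, b < |g k - h k| := by
  by_contra hcon
  push_neg at hcon
  have : ‖g - h‖ ≤ b := by
    rw [← ZeroAtInftyContinuousMap.norm_toBCF_eq_norm]
    refine (BoundedContinuousFunction.norm_le hb).2 (fun k => ?_)
    simpa [Real.norm_eq_abs] using hcon k
  linarith

end EmbAux

end EmbAux

set_option maxHeartbeats 1000000 in
/-- Every bi-Lipschitz embedding of `ℓ₁` into `c₀` has distortion at least `2`: there are no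
`s > 0`, `C < 2` and `f : ℓ₁ → c₀` with `s·‖x − y‖₁ ≤ ‖f(x) − f(y)‖_∞ ≤ s·C·‖x − y‖₁`. -/
theorem ell1_no_embedding_c0_distortion_lt_two :
    ¬ ∃ (s C : ℝ) (f : lp (fun _ : ℕ => ℝ) 1 → ZeroAtInftyContinuousMap ℕ ℝ), 0 < s ∧ C < 2 ∧
      ∀ x y : lp (fun _ : ℕ => ℝ) 1,
        s * ‖x - y‖ ≤ ‖f x - f y‖ ∧ ‖f x - f y‖ ≤ s * C * ‖x - y‖ := by
  rintro ⟨s, C, f, hs, hC2, hf⟩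
  classical
  set a : lp (fun _ : ℕ => ℝ) 1 := EmbAux.sing 0 + EmbAux.sing 1 with ha
  set X : ℕ → lp (fun _ : ℕ => ℝ) 1 := fun m => a + EmbAux.sing (m+2) with hX
  set Y : ℕ → lp (fun _ : ℕ => ℝ) 1 := fun m => EmbAux.sing (m+2) with hY
  have hY0 : ∀ p, ‖Y p - 0‖ = 1 := fun p => by
    rw [sub_zero]; exact EmbAux.norm_sing _
  -- C ≥ 1
  have hC1 : (1:ℝ) ≤ C := by
    have h1 := (hf (Y 0) 0).1
    have h2 := (hf (Y 0) 0).2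
    rw [hY0 0] at h1 h2
    simp only [mul_one] at h1 h2
    nlinarith [le_trans h1 h2, hs]
  set ε : ℝ := (2 - C)/2 with hεdef
  have hε : (0:ℝ) < ε := by rw [hεdef]; linarith
  have hsε : 0 < s * ε := mul_pos hs hε
  -- pointwise upper bounds
  have coordUB : ∀ (x y : lp (fun _ : ℕ => ℝ) 1) (k : ℕ),
      |f x k - f y k| ≤ s * C * ‖x - y‖ :=
    fun x y k => le_trans (EmbAux.coord_abs_le _ _ k) (hf x y).2
  -- distances
  have hXa : ∀ m, ‖X m - a‖ = 1 := fun m => by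
    rw [hX]; rw [add_sub_cancel_left]; exact EmbAux.norm_sing _
  have hXYm : ∀ m, ‖X m - Y m‖ = 2 := fun m => by
    rw [hX, hY]; rw [add_sub_cancel_right, ha]; exact EmbAux.norm_a
  have hcross : ∀ m p, m ≠ p → ‖X m - Y p‖ = 4 := fun m p h => by
    rw [hX, hY, ha]; exact EmbAux.norm_cross m p h
  -- tail bound
  set τ : ℝ := (4 - ε) * s - 2 * (s * C) with hτdef
  have hτ : 0 < τ := by rw [hτdef, hεdef]; nlinarith
  have htail : ∀ᶠ k in atTop, |f a k - f 0 k| < τ := by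
    have h1 : Tendsto (⇑(f a - f 0)) atTop (nhds 0) := by
      have := (f a - f 0).zero_at_infty'
      rwa [cocompact_eq_cofinite ℕ, Nat.cofinite_eq_atTop] at this
    have h2 : ∀ᶠ k in atTop, (⇑(f a - f 0)) k ∈ Metric.ball (0:ℝ) τ :=
      h1 (Metric.ball_mem_nhds (0:ℝ) hτ)
    refine h2.mono (fun k hk => ?_)
    simpa [Real.dist_eq, ZeroAtInftyContinuousMap.coe_sub, Metric.mem_ball] using hk
  obtain ⟨K, hK⟩ := Filter.eventually_atTop.mp htail
  -- witness coordinates live below K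
  have key : ∀ m p, m ≠ p → ∃ k, k < K ∧ (4 - ε) * s < |f (X m) k - f (Y p) k| := by
    intro m p hmp
    have hlow : s * 4 ≤ ‖f (X m) - f (Y p)‖ := by
      have := (hf (X m) (Y p)).1; rwa [hcross m p hmp] at this
    have hb : (0:ℝ) ≤ (4 - ε) * s := by nlinarith
    have hblt : (4 - ε) * s < ‖f (X m) - f (Y p)‖ := by nlinarith
    obtain ⟨k, hk⟩ := EmbAux.exists_coord _ _ hb hblt
    refine ⟨k, ?_, hk⟩
    by_contra hKk
    push_neg at hKk
    have h1 : |f (X m) k - f a k| ≤ s * C := by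
      have := coordUB (X m) a k; rwa [hXa m, mul_one] at this
    have h2 : |f (Y p) k - f 0 k| ≤ s * C := by
      have := coordUB (Y p) 0 k; rwa [hY0 p, mul_one] at this
    have h3 : |f a k - f 0 k| < τ := hK k hKk
    have t1 : |f (X m) k - f (Y p) k|
        ≤ |f (X m) k - f a k| + |f a k - f (Y p) k| := abs_sub_le _ _ _
    have t2 : |f a k - f (Y p) k|
        ≤ |f a k - f 0 k| + |f 0 k - f (Y p) k| := abs_sub_le _ _ _
    rw [abs_sub_comm] at h2
    rw [hτdef] at h3
    linarith
  -- bounded values at each coordinate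
  have hYz : ∀ m k, |f (Y m) k - f 0 k| ≤ s * C := fun m k => by
    have := coordUB (Y m) 0 k; rwa [hY0 m, mul_one] at this
  have hsC : (0:ℝ) ≤ s * C := by nlinarith
  -- pigeonhole coloring
  set B : ℕ := Nat.ceil (2 * C / ε) with hB
  let color : ℕ → Fin K → Fin (B+1) := fun m j =>
    ⟨Nat.floor ((f (Y m) j.1 - f 0 j.1 + s * C) / (s * ε)), by
      have h1 := (abs_le.mp (hYz m j.1)).2
      have hnum : f (Y m) j.1 - f 0 j.1 + s * C ≤ 2 * (s * C) := by linarith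
      have hq : (f (Y m) j.1 - f 0 j.1 + s * C) / (s * ε) ≤ 2 * C / ε := by
        rw [div_le_div_iff₀ hsε hε]
        nlinarith [mul_le_mul_of_nonneg_right hnum (le_of_lt hε)]
      have h4 := Nat.floor_le_floor hq
      have h5 : Nat.floor (2 * C / ε) ≤ B := by rw [hB]; exact Nat.floor_le_ceil _
      exact Nat.lt_succ_of_le (le_trans h4 h5)⟩
  obtain ⟨m, p, hmp, hcol⟩ := Finite.exists_ne_map_eq_of_infinite color
  -- close values below K
  have hclose : ∀ k, k < K → |f (Y m) k - f (Y p) k| < s * ε := by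
    intro k hkK
    have hc : (color m ⟨k, hkK⟩).1 = (color p ⟨k, hkK⟩).1 := by rw [hcol]
    have hfl : Nat.floor ((f (Y m) k - f 0 k + s * C) / (s * ε))
        = Nat.floor ((f (Y p) k - f 0 k + s * C) / (s * ε)) := hc
    have hym0 : 0 ≤ f (Y m) k - f 0 k + s * C := by
      have := (abs_le.mp (hYz m k)).1; linarith
    have hyp0 : 0 ≤ f (Y p) k - f 0 k + s * C := by
      have := (abs_le.mp (hYz p k)).1; linarith
    have h1 : ((Nat.floor ((f (Y m) k - f 0 k + s * C) / (s * ε)) : ℕ) : ℝ)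
        ≤ (f (Y m) k - f 0 k + s * C) / (s * ε) :=
      Nat.floor_le (div_nonneg hym0 hsε.le)
    have h2 : (f (Y m) k - f 0 k + s * C) / (s * ε)
        < (Nat.floor ((f (Y m) k - f 0 k + s * C) / (s * ε)) : ℝ) + 1 :=
      Nat.lt_floor_add_one _
    have h3 : ((Nat.floor ((f (Y p) k - f 0 k + s * C) / (s * ε)) : ℕ) : ℝ)
        ≤ (f (Y p) k - f 0 k + s * C) / (s * ε) :=
      Nat.floor_le (div_nonneg hyp0 hsε.le)
    have h4 : (f (Y p) k - f 0 k + s * C) / (s * ε)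
        < (Nat.floor ((f (Y p) k - f 0 k + s * C) / (s * ε)) : ℝ) + 1 :=
      Nat.lt_floor_add_one _
    rw [hfl] at h1 h2
    have e1 := (le_div_iff₀ hsε).mp h1
    have e2 := (div_lt_iff₀ hsε).mp h2
    have e3 := (le_div_iff₀ hsε).mp h3
    have e4 := (div_lt_iff₀ hsε).mp h4
    rw [abs_sub_lt_iff]
    constructor <;> linarith
  -- final contradiction
  obtain ⟨k, hkK, hkW⟩ := key m p hmp
  have h1 : |f (X m) k - f (Y m) k| ≤ s * C * 2 := by
    have := coordUB (X m) (Y m) k; rwa [hXYm m] at this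
  have h2 := hclose k hkK
  have h3 : |f (X m) k - f (Y p) k|
      ≤ |f (X m) k - f (Y m) k| + |f (Y m) k - f (Y p) k| := abs_sub_le _ _ _
  have hfin : (4 - ε) * s < s * C * 2 + s * ε := by linarith
  rw [hεdef] at hfin
  nlinarith
end

section
/- For every integer k ≥ 2 and every constant D, if there exists a map f : Δ_k → C([0, ω^{k−1}]) satisfying d_Δ(σ,τ) ≤ ‖f(σ) − f(τ)‖_∞ ≤ D·d_Δ(σ,τ) for all σ, τ ∈ Δ_k, then D ≥ k/(k−1). -/
open Ordinal Order Set Filter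

namespace Ordinal

theorem opow_succ_dvd_of_accPt {j o : Ordinal} (h : AccPt o (𝓟 {y | ω ^ j ∣ y})) :
    ω ^ (j + 1) ∣ o := by
  have hω : 0 < ω ^ j := opow_pos j omega0_pos
  have happ : ∀ {c}, ω ^ j * c < o → ∃ d, c < d ∧ ω ^ j * d < o := by
    intro c hc
    obtain ⟨_, ⟨d, rfl⟩, hcd, hdo⟩ := (SuccOrder.accPt_principal.mp h).2 _ hc
    exact ⟨d, (mul_lt_mul_iff_right₀ hω).1 hcd, hdo⟩
  set q := o / ω ^ j
  have hmul : ω ^ j * q = o := by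
    by_contra hne
    obtain ⟨d, hqd, hdo⟩ := happ ((mul_div_le o _).lt_of_ne hne)
    have hdq : d < succ q :=
      (mul_lt_mul_iff_right₀ hω).1 (hdo.trans (lt_mul_succ_div o hω.ne'))
    exact (lt_succ_iff.1 hdq).not_gt hqd
  have hlim : IsSuccPrelimit q := by
    refine isSuccPrelimit_iff_succ_lt.2 fun c hc => ?_
    obtain ⟨d, hcd, hdo⟩ := happ (hmul ▸ (mul_lt_mul_iff_right₀ hω).2 hc)
    exact (succ_le_of_lt hcd).trans_lt ((mul_lt_mul_iff_right₀ hω).1 (hmul ▸ hdo))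
  rw [← hmul, opow_add, opow_one]
  exact mul_dvd_mul_left _ (isSuccPrelimit_iff_omega0_dvd.1 hlim)

theorem derivedSet_setOf_opow_dvd_subset (A j : Ordinal) :
    derivedSet {x : Iic A | ω ^ j ∣ x.1} ⊆ {x | x.1 ≠ 0 ∧ ω ^ (j + 1) ∣ x.1} := by
  intro x hx
  have hacc : AccPt x.1 (𝓟 {y | ω ^ j ∣ y}) :=
    derivedSet_mono _ _ (image_subset_iff.2 fun _ h => h)
      (continuous_subtype_val.image_derivedSet Subtype.val_injective (mem_image_of_mem _ hx))
  exact ⟨hacc.isSuccLimit.ne_bot, opow_succ_dvd_of_accPt hacc⟩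

theorem iterate_derivedSet_univ_subset (A : Ordinal) :
    ∀ i : ℕ, derivedSet^[i] (Set.univ : Set (Iic A)) ⊆ {x | ω ^ (i : Ordinal) ∣ x.1}
  | 0 => fun x _ => by simp
  | i + 1 => by
    rw [Function.iterate_succ_apply']
    refine (derivedSet_mono _ _ (iterate_derivedSet_univ_subset A i)).trans fun x hx => ?_
    simpa using (derivedSet_setOf_opow_dvd_subset A i hx).2

theorem iterate_derivedSet_univ_Iic_opow (n : ℕ) :
    derivedSet^[n + 1] (Set.univ : Set (Iic (ω ^ (n : Ordinal)))) = ∅ := by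
  refine eq_empty_of_forall_notMem fun x hx => ?_
  rw [Function.iterate_succ_apply'] at hx
  obtain ⟨hx0, hdvd⟩ :=
    derivedSet_setOf_opow_dvd_subset _ _
      (derivedSet_mono _ _ (iterate_derivedSet_univ_subset _ n) hx)
  have := (le_of_dvd hx0 hdvd).trans x.2
  rw [opow_le_opow_iff_right one_lt_omega0] at this
  exact (lt_add_one _).not_ge this

end Ordinal

theorem Set.Infinite.exists_ne_forall_abs_sub_lt {ι X : Type*} {N : Set ι} (hN : N.Infinite)
    {F : Set X} (hF : F.Finite) {g : ι → X → ℝ} {C : ℝ} (hg : ∀ n ∈ N, ∀ x ∈ F, |g n x| ≤ C)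
    {ε : ℝ} (hε : 0 < ε) : ∃ n ∈ N, ∃ m ∈ N, n ≠ m ∧ ∀ x ∈ F, |g n x - g m x| < ε := by
  have hbox : MapsTo (fun n (x : F) => ⌊g n x / ε⌋) N (univ.pi fun _ => Icc ⌊-C / ε⌋ ⌊C / ε⌋) :=
    fun n hn x _ => ⟨Int.floor_mono (div_le_div_of_nonneg_right (abs_le.1 (hg n hn x x.2)).1 hε.le),
      Int.floor_mono (div_le_div_of_nonneg_right (abs_le.1 (hg n hn x x.2)).2 hε.le)⟩
  have : Finite F := hF
  obtain ⟨n, hn, m, hm, hnm, heq⟩ :=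
    hN.exists_ne_map_eq_of_mapsTo hbox (Finite.pi fun _ => finite_Icc _ _)
  refine ⟨n, hn, m, hm, hnm, fun x hx => ?_⟩
  have := Int.abs_sub_lt_one_of_floor_eq_floor (congrFun heq ⟨x, hx⟩)
  rwa [← sub_div, abs_div, abs_of_pos hε, div_lt_one hε] at this

section Separation

variable {X : Type*} [TopologicalSpace X]

def Dominates (z : ℕ → C(X, ℝ)) (ε : ℝ) (s t : Finset ℕ) (x : X) : Prop :=
  ∀ a ∈ s, ∀ b ∈ t, z b x + ε ≤ z a x

def SeparatesOn (z : ℕ → C(X, ℝ)) (ε : ℝ) (h : ℕ) (W : Set X) : Prop :=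
  ∀ s t : Finset ℕ, s.card = h → t.card = h → Disjoint s t →
    ∃ x ∈ W, Dominates z ε s t x ∨ Dominates z ε t s x

theorem Dominates.mono {z : ℕ → C(X, ℝ)} {ε : ℝ} {s s' t t' : Finset ℕ} {x : X}
    (h : Dominates z ε s t x) (hs : s' ⊆ s) (ht : t' ⊆ t) : Dominates z ε s' t' x :=
  fun a ha b hb => h a (hs ha) b (ht hb)

theorem isClosed_setOf_dominates (z : ℕ → C(X, ℝ)) (ε : ℝ) (s t : Finset ℕ) :
    IsClosed {x | Dominates z ε s t x} := by
  simp only [Dominates, ofPred_forall]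
  exact isClosed_biInter fun a _ => isClosed_biInter fun b _ =>
    isClosed_le (by fun_prop) (by fun_prop)

variable [CompactSpace X] {z : ℕ → C(X, ℝ)} {ε : ℝ}

theorem Dominates.of_le_sub {u v : C(X, ℝ)} {s t : Finset ℕ} {L r : ℝ} {x : X}
    (hx : L ≤ u x - v x) (hs : ∀ a ∈ s, ‖u - z a‖ ≤ r) (ht : ∀ b ∈ t, ‖v - z b‖ ≤ r) :
    Dominates z (L - 2 * r) s t x := by
  intro a ha b hb
  have hua := abs_le.1 <| ((u - z a).norm_coe_le_norm x).trans (hs a ha)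
  have hvb := abs_le.1 <| ((v - z b).norm_coe_le_norm x).trans (ht b hb)
  simp only [ContinuousMap.sub_apply] at hua hvb
  linarith [hua.2, hvb.1]

theorem exists_dominates_of_le_norm_sub [Nonempty X] {u v : C(X, ℝ)} {s t : Finset ℕ} {L r : ℝ}
    (huv : L ≤ ‖u - v‖) (hs : ∀ a ∈ s, ‖u - z a‖ ≤ r) (ht : ∀ b ∈ t, ‖v - z b‖ ≤ r) :
    ∃ x, Dominates z (L - 2 * r) s t x ∨ Dominates z (L - 2 * r) t s x := by
  obtain ⟨x, -, hx⟩ :=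
    isCompact_univ.exists_isMaxOn univ_nonempty (map_continuous (u - v)).norm.continuousOn
  have hLx : L ≤ |u x - v x| :=
    huv.trans <| ((u - v).norm_le (norm_nonneg _)).2 fun y => hx (mem_univ y)
  refine ⟨x, (le_abs'.1 hLx).symm.imp (fun h => .of_le_sub h hs ht) fun h => ?_⟩
  exact .of_le_sub (u := v) (v := u) (by linarith) ht hs

theorem exists_mem_derivedSet_dominates {W : Set X} {s t : Finset ℕ}
    (hinf : {x ∈ W | Dominates z ε s t x}.Infinite) :
    ∃ x ∈ derivedSet W, Dominates z ε s t x := by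
  obtain ⟨x, hx⟩ := hinf.exists_accPt_principal
  exact ⟨x, derivedSet_mono _ _ (sep_subset _ _) hx, closure_minimal (fun y hy => hy.2)
    (isClosed_setOf_dominates z ε s t) (derivedSet_subset_closure _ hx)⟩

variable {C : ℝ} {h : ℕ} {W : Set X}

theorem SeparatesOn.infinite_witnesses (hε : 0 < ε) (hC : ∀ n, ‖z n‖ ≤ C)
    (hW : SeparatesOn z ε (h + 1) W) {s t : Finset ℕ} (hs : s.card = h) (ht : t.card = h)
    (hst : Disjoint s t) :
    {x ∈ W | Dominates z ε s t x ∨ Dominates z ε t s x}.Infinite := by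
  intro hfin
  have hfresh : {n | n ∉ s ∪ t}.Infinite := (s ∪ t).finite_toSet.infinite_compl
  obtain ⟨n, hn, m, hm, hnm, hclose⟩ := hfresh.exists_ne_forall_abs_sub_lt hfin
    (fun n _ x _ => ((z n).norm_coe_le_norm x).trans (hC n)) hε
  simp only [mem_ofPred_eq, Finset.mem_union, not_or] at hn hm
  obtain ⟨x, hxW, hx⟩ := hW (insert n s) (insert m t)
    (by rw [Finset.card_insert_of_notMem hn.1, hs]) (by rw [Finset.card_insert_of_notMem hm.2, ht])
    (by simp [Finset.disjoint_insert_left, Finset.disjoint_insert_right, hnm.symm, hn.2, hm.1, hst])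
  have hgap := abs_lt.1 <| hclose x ⟨hxW, hx.imp
    (·.mono (Finset.subset_insert _ _) (Finset.subset_insert _ _))
    (·.mono (Finset.subset_insert _ _) (Finset.subset_insert _ _))⟩
  rcases hx with hx | hx
  · linarith [hx n (Finset.mem_insert_self _ _) m (Finset.mem_insert_self _ _)]
  · linarith [hx m (Finset.mem_insert_self _ _) n (Finset.mem_insert_self _ _)]

theorem SeparatesOn.to_derivedSet (hε : 0 < ε) (hC : ∀ n, ‖z n‖ ≤ C)
    (hW : SeparatesOn z ε (h + 1) W) : SeparatesOn z ε h (derivedSet W) := by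
  intro s t hs ht hst
  rcases infinite_union.1 (sep_or ▸ hW.infinite_witnesses hε hC hs ht hst) with hinf | hinf
  · obtain ⟨x, hx, hdom⟩ := exists_mem_derivedSet_dominates hinf
    exact ⟨x, hx, .inl hdom⟩
  · obtain ⟨x, hx, hdom⟩ := exists_mem_derivedSet_dominates hinf
    exact ⟨x, hx, .inr hdom⟩

theorem SeparatesOn.nonempty_iterate_derivedSet (hε : 0 < ε) (hC : ∀ n, ‖z n‖ ≤ C) :
    ∀ {h : ℕ} {W : Set X}, SeparatesOn z ε h W → (derivedSet^[h] W).Nonempty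
  | 0, _, hW =>
    let ⟨x, hx, _⟩ := hW ∅ ∅ rfl rfl (Finset.disjoint_empty_left _)
    ⟨x, hx⟩
  | _ + 1, _, hW => by
    rw [Function.iterate_succ_apply]
    exact nonempty_iterate_derivedSet hε hC (hW.to_derivedSet hε hC)

theorem separatesOn_singletons_of_biLipschitz [Nonempty X] {k : ℕ} (hk : 1 ≤ k) {D : ℝ}
    (f : {σ : Finset ℕ // σ.card ≤ k} → C(X, ℝ))
    (hf : ∀ σ τ : {σ : Finset ℕ // σ.card ≤ k},
      ((symmDiff σ.1 τ.1).card : ℝ) ≤ ‖f σ - f τ‖ ∧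
        ‖f σ - f τ‖ ≤ D * ((symmDiff σ.1 τ.1).card : ℝ)) :
    SeparatesOn (fun n => f ⟨{n}, (Finset.card_singleton n).trans_le hk⟩)
      (2 * k - 2 * ((k - 1) * D)) k univ := by
  intro s t hs ht hst
  have hnear : ∀ (u : Finset ℕ) (hu : u.card = k), ∀ a ∈ u,
      ‖f ⟨u, hu.le⟩ - f ⟨{a}, (Finset.card_singleton a).trans_le hk⟩‖ ≤ (k - 1) * D := by
    intro u hu a ha
    have hcard : (symmDiff u {a}).card = k - 1 := by
      rw [symmDiff_of_ge (Finset.singleton_subset_iff.2 ha), Finset.sdiff_singleton_eq_erase,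
        Finset.card_erase_of_mem ha, hu]
    simpa [hcard, Nat.cast_sub hk, mul_comm] using (hf ⟨u, hu.le⟩ ⟨{a}, _⟩).2
  have hfar : 2 * (k : ℝ) ≤ ‖f ⟨s, hs.le⟩ - f ⟨t, ht.le⟩‖ := by
    have hcard : (symmDiff s t).card = 2 * k := by
      rw [Finset.symmDiff_eq_union hst, Finset.card_union_of_disjoint hst, hs, ht, two_mul]
    simpa [hcard] using (hf ⟨s, hs.le⟩ ⟨t, ht.le⟩).1
  obtain ⟨x, hx⟩ := exists_dominates_of_le_norm_sub hfar (hnear s hs) (hnear t ht)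
  exact ⟨x, mem_univ x, hx⟩

theorem natCast_le_sub_one_mul_of_iterate_derivedSet_eq_empty [Nonempty X] {k : ℕ}
    (hX : derivedSet^[k] (univ : Set X) = ∅) {D : ℝ}
    (f : {σ : Finset ℕ // σ.card ≤ k} → C(X, ℝ))
    (hf : ∀ σ τ : {σ : Finset ℕ // σ.card ≤ k},
      ((symmDiff σ.1 τ.1).card : ℝ) ≤ ‖f σ - f τ‖ ∧
        ‖f σ - f τ‖ ≤ D * ((symmDiff σ.1 τ.1).card : ℝ)) :
    (k : ℝ) ≤ (k - 1) * D := by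
  obtain rfl | hk := k.eq_zero_or_pos
  · simp at hX
  by_contra! hD
  have hC : ∀ n, ‖f ⟨{n}, (Finset.card_singleton n).trans_le hk⟩‖ ≤ ‖f ⟨∅, by simp⟩‖ + D := by
    intro n
    have hLip := (hf ⟨{n}, (Finset.card_singleton n).trans_le hk⟩ ⟨∅, by simp⟩).2
    simp only [show symmDiff ({n} : Finset ℕ) ∅ = {n} from symmDiff_bot _, Finset.card_singleton,
      Nat.cast_one, mul_one] at hLip
    linarith [norm_le_norm_add_norm_sub' (f ⟨{n}, (Finset.card_singleton n).trans_le hk⟩)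
      (f ⟨∅, by simp⟩)]
  exact ((separatesOn_singletons_of_biLipschitz hk f hf).nonempty_iterate_derivedSet
    (by linarith) hC).ne_empty hX

end Separation

/-- For `k ≥ 2`, any `D` such that some `f : Δ_k → C([0, ω^(k−1)])` satisfies
`d_Δ(σ,τ) ≤ ‖f σ − f τ‖ ≤ D·d_Δ(σ,τ)` must satisfy `D ≥ k/(k−1)`. -/
theorem distortion_lower_bound_deltaK_C_omega_pow_pred (k : ℕ) (hk : 2 ≤ k) (D : ℝ)
    (f : {σ : Finset ℕ // σ.card ≤ k} →
      C(↥(Set.Iic (Ordinal.omega0 ^ ((k - 1 : ℕ) : Ordinal))), ℝ))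
    (hf : ∀ σ τ : {σ : Finset ℕ // σ.card ≤ k},
      ((symmDiff σ.1 τ.1).card : ℝ) ≤ ‖f σ - f τ‖ ∧
        ‖f σ - f τ‖ ≤ D * ((symmDiff σ.1 τ.1).card : ℝ)) :
    (k : ℝ) / ((k : ℝ) - 1) ≤ D := by
  have hX : derivedSet^[k] (Set.univ : Set (Set.Iic (ω ^ ((k - 1 : ℕ) : Ordinal)))) = ∅ := by
    simpa [Nat.sub_add_cancel (by omega : 1 ≤ k)] using
      Ordinal.iterate_derivedSet_univ_Iic_opow (k - 1)
  have hk1 : (0 : ℝ) < k - 1 := by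
    have : (2 : ℝ) ≤ k := by exact_mod_cast hk
    linarith
  rw [div_le_iff₀ hk1, mul_comm]
  exact natCast_le_sub_one_mul_of_iterate_derivedSet_eq_empty hX f hf
end

section
/- For every integer k ≥ 2, the infimum over all bi-Lipschitz embeddings f : Δ_k → C([0, ω^{k−1}]) of the distortion dist(f) equals k/(k−1), and this infimum is attained by some embedding. -/
open Set Filter Topology CantorBendixson
open scoped symmDiff Ordinal

namespace Finset

variable {α : Type*} [DecidableEq α] {a : α} {s t : Finset α}

theorem card_symmDiff_eq_card_sdiff_add_card_sdiff (s t : Finset α) :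
    (s ∆ t).card = (s \ t).card + (t \ s).card :=
  card_union_of_disjoint disjoint_sdiff_sdiff

theorem card_symmDiff_of_disjoint (h : Disjoint s t) : (s ∆ t).card = s.card + t.card := by
  rw [symmDiff_eq_union h, card_union_of_disjoint h]

theorem insert_symmDiff_insert (hs : a ∉ s) (ht : a ∉ t) : insert a s ∆ insert a t = s ∆ t := by
  ext x
  by_cases hx : x = a <;> simp_all [mem_symmDiff]

theorem insert_symmDiff_self (ha : a ∉ s) : insert a s ∆ s = {a} := by
  simp [symmDiff_of_ge (subset_insert a s), insert_sdiff_of_notMem _ ha]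

end Finset

theorem CantorBendixson.iteratedDerivedSet_natCast_succ {X : Type*} [TopologicalSpace X]
    {s : Set X} (hs : IsClosed s) (r : ℕ) : sᵈ[↑(r + 1)] = derivedSet sᵈ[↑r] := by
  rw [Nat.cast_succ, iteratedDerivedSet_succ, (isClosed_iteratedDerivedSet hs r).relDerivedSet_eq]

theorem Set.Finite.sep_le_of_lt_on_derivedSet {K : Type*} [TopologicalSpace K] [CompactSpace K]
    {g : K → ℝ} (hg : Continuous g) {E : Set K} {a : ℝ} (h : ∀ x ∈ derivedSet E, g x < a) :
    {x ∈ E | a ≤ g x}.Finite := by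
  by_contra hinf
  obtain ⟨y, hy⟩ := Set.Infinite.exists_accPt_principal hinf
  have hle : a ≤ g y :=
    (isClosed_le continuous_const hg).closure_subset_iff.2 (fun x hx => hx.2)
      (derivedSet_subset_closure _ hy)
  exact (h y (derivedSet_mono _ _ (sep_subset _ _) hy)).not_ge hle

theorem exists_ne_dist_lt_of_isBounded {X : Type*} [PseudoMetricSpace X] [ProperSpace X]
    {v : ℕ → X} (hv : Bornology.IsBounded (range v)) {ε : ℝ} (hε : 0 < ε) :
    ∃ a b, a ≠ b ∧ dist (v a) (v b) < ε := by
  obtain ⟨_, -, φ, hφ, hlim⟩ := tendsto_subseq_of_bounded hv mem_range_self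
  obtain ⟨N, hN⟩ := Metric.cauchySeq_iff'.1 hlim.cauchySeq ε hε
  exact ⟨φ (N + 1), φ N, (hφ N.lt_succ_self).ne', hN _ N.le_succ⟩

section SignSum

open scoped Classical

variable {X : Type*} {U : ℕ → Set X}

theorem abs_sum_sign_le (s : Finset ℕ) (x : X) :
    |∑ m ∈ s, if x ∈ U m then (-1 : ℝ) else 1| ≤ s.card := by
  refine (Finset.abs_sum_le_sum_abs _ _).trans ?_
  simpa using Finset.sum_le_sum fun m (_ : m ∈ s) =>
    show |if x ∈ U m then (-1 : ℝ) else 1| ≤ 1 by split_ifs <;> simp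

theorem sum_sign_eq_of_forall_mem_iff {T : Finset ℕ} {x : X} (hx : ∀ m, x ∈ U m ↔ m ∈ T)
    (s : Finset ℕ) :
    (∑ m ∈ s, if x ∈ U m then (-1 : ℝ) else 1) = s.card - 2 * (s ∩ T).card := by
  simp only [hx]
  rw [Finset.sum_ite, Finset.filter_mem_eq_inter, Finset.filter_not, Finset.filter_mem_eq_inter]
  simp [Finset.card_sdiff, Finset.inter_comm,
    Nat.cast_sub (Finset.card_le_card Finset.inter_subset_right)]
  ring

variable [TopologicalSpace X]

noncomputable def signSum (hU : ∀ m, IsClopen (U m)) (σ : Finset ℕ) : C(X, ℝ) where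
  toFun x := ∑ m ∈ σ, if x ∈ U m then -1 else 1
  continuous_toFun := continuous_finsetSum σ fun m _ =>
    continuous_if (by simp [(hU m).frontier_eq]) continuousOn_const continuousOn_const

theorem signSum_sub_signSum_apply (hU : ∀ m, IsClopen (U m)) (σ τ : Finset ℕ) (x : X) :
    (signSum hU σ - signSum hU τ) x = (∑ m ∈ σ \ τ, if x ∈ U m then -1 else 1) -
      ∑ m ∈ τ \ σ, if x ∈ U m then -1 else 1 :=
  Finset.sum_sdiff_sub_sum_sdiff.symm

variable [CompactSpace X]

theorem norm_signSum_sub_le (hU : ∀ m, IsClopen (U m)) (σ τ : Finset ℕ) :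
    ‖signSum hU σ - signSum hU τ‖ ≤ (σ ∆ τ).card := by
  refine (ContinuousMap.norm_le _ (Nat.cast_nonneg _)).2 fun x => ?_
  rw [Real.norm_eq_abs, signSum_sub_signSum_apply,
    Finset.card_symmDiff_eq_card_sdiff_add_card_sdiff, Nat.cast_add]
  exact (abs_sub _ _).trans (add_le_add (abs_sum_sign_le _ x) (abs_sum_sign_le _ x))

theorem le_norm_signSum_sub (hU : ∀ m, IsClopen (U m)) {σ τ T : Finset ℕ}
    (hT : T ⊆ τ \ σ) {x : X} (hx : ∀ m, x ∈ U m ↔ m ∈ T) :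
    ((σ \ τ).card : ℝ) - (τ \ σ).card + 2 * T.card ≤ ‖signSum hU σ - signSum hU τ‖ := by
  have hdisj : σ \ τ ∩ T = ∅ :=
    Finset.disjoint_iff_inter_eq_empty.1 (Finset.disjoint_of_subset_right hT disjoint_sdiff_sdiff)
  calc ((σ \ τ).card : ℝ) - (τ \ σ).card + 2 * T.card
      = (signSum hU σ - signSum hU τ) x := by
        rw [signSum_sub_signSum_apply, sum_sign_eq_of_forall_mem_iff hx,
          sum_sign_eq_of_forall_mem_iff hx, hdisj, Finset.inter_eq_right.2 hT]
        simp
        ring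
    _ ≤ ‖signSum hU σ - signSum hU τ‖ :=
      (le_abs_self _).trans ((signSum hU σ - signSum hU τ).norm_coe_le_norm x)

theorem mul_card_symmDiff_le_mul_norm_signSum_sub (hU : ∀ m, IsClopen (U m)) {e : ℕ}
    (hU_rich : ∀ T : Finset ℕ, T.card ≤ e → ∃ x, ∀ m, x ∈ U m ↔ m ∈ T)
    {σ τ : Finset ℕ} (hσ : σ.card ≤ e + 1) (hτ : τ.card ≤ e + 1) :
    (e : ℝ) * (σ ∆ τ).card ≤ (e + 1) * ‖signSum hU σ - signSum hU τ‖ := by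
  have card_symmDiff_le_of_card_sdiff_le : ∀ {σ τ : Finset ℕ}, (τ \ σ).card ≤ e →
      ((σ ∆ τ).card : ℝ) ≤ ‖signSum hU σ - signSum hU τ‖ := by
    intro σ τ h
    obtain ⟨x, hx⟩ := hU_rich _ h
    have := le_norm_signSum_sub hU subset_rfl hx
    rw [Finset.card_symmDiff_eq_card_sdiff_add_card_sdiff]
    push_cast
    linarith
  have hd : (0 : ℝ) ≤ (σ ∆ τ).card := Nat.cast_nonneg _
  rcases le_or_gt (τ \ σ).card e with hb | hb
  · nlinarith [card_symmDiff_le_of_card_sdiff_le hb]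
  rcases le_or_gt (σ \ τ).card e with ha | ha
  · have := card_symmDiff_le_of_card_sdiff_le ha
    rw [symmDiff_comm, norm_sub_rev] at this
    nlinarith
  have ha' : (σ \ τ).card = e + 1 :=
    le_antisymm ((Finset.card_le_card Finset.sdiff_subset).trans hσ) ha
  have hb' : (τ \ σ).card = e + 1 :=
    le_antisymm ((Finset.card_le_card Finset.sdiff_subset).trans hτ) hb
  obtain ⟨T, hT, hTcard⟩ := Finset.exists_subset_card_eq (show e ≤ (τ \ σ).card by omega)
  obtain ⟨x, hx⟩ := hU_rich T hTcard.le
  have := le_norm_signSum_sub hU hT hx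
  rw [ha', hb', hTcard] at this
  rw [Finset.card_symmDiff_eq_card_sdiff_add_card_sdiff, ha', hb']
  push_cast at this ⊢
  nlinarith

end SignSum

namespace Ordinal

theorem continuous_sub_right (a : Ordinal) : Continuous (· - a) := by
  refine continuous_def.2 fun s hs => SuccOrder.isOpen_iff.2 fun o ho hlim => ?_
  rcases le_or_gt o a with hoa | hao
  · refine ⟨0, hlim.bot_lt, fun y hy => ?_⟩
    have hya : y ≤ a := hy.2.le.trans hoa
    simpa only [mem_preimage, Ordinal.sub_eq_zero_iff_le.2 hoa,
      Ordinal.sub_eq_zero_iff_le.2 hya] using ho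
  · obtain ⟨b, hb, hbs⟩ :=
      SuccOrder.isOpen_iff.1 hs _ ho (isSuccLimit_sub hlim.isSuccPrelimit hao)
    refine ⟨a + b, lt_sub.1 hb, fun y hy => hbs ⟨lt_sub.2 hy.1, ?_⟩⟩
    rw [lt_sub, Ordinal.add_sub_cancel_of_le (le_self_add.trans hy.1.le)]
    exact hy.2

theorem isClopen_Ioc (a b : Ordinal) : IsClopen (Ioc a b) := by
  constructor
  · rw [← Ioi_inter_Iic, ← Order.Ici_succ]
    exact isClosed_Ici.inter isClosed_Iic
  · rw [← Ioi_inter_Iic, ← Order.Iio_succ]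
    exact isOpen_Ioi.inter isOpen_Iio

def column (e q : ℕ) : Set Ordinal :=
  Ioc (ω ^ (e : Ordinal) * q) (ω ^ (e : Ordinal) * (q + 1))

theorem add_mem_column {e : ℕ} (q : ℕ) {x : Ordinal} (hx₀ : 0 < x)
    (hx : x ≤ ω ^ (e : Ordinal)) : ω ^ (e : Ordinal) * q + x ∈ column e q := by
  rw [column, mul_add_one]
  exact ⟨lt_add_of_pos_right _ hx₀, add_le_add_right hx _⟩

theorem eq_of_mem_column {e q q' : ℕ} {x : Ordinal} (h : x ∈ column e q)
    (h' : x ∈ column e q') : q = q' := by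
  have key : ∀ {q q' : ℕ}, q < q' → x ∈ column e q → x ∉ column e q' := fun hlt h h' =>
    h'.1.not_ge (h.2.trans (mul_le_mul_right (by exact_mod_cast hlt) _))
  rcases lt_trichotomy q q' with hlt | heq | hgt
  exacts [(key hlt h h').elim, heq, (key hgt h' h).elim]

theorem column_subset_Iio (e q : ℕ) : column e q ⊆ Iio (ω ^ ((e + 1 : ℕ) : Ordinal)) := by
  intro x hx
  refine hx.2.trans_lt ?_
  rw [Nat.cast_succ, opow_add_one]
  exact (mul_lt_mul_iff_right₀ (opow_pos _ omega0_pos)).2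
    (by exact_mod_cast natCast_lt_omega0 (q + 1))

/-- The restriction `q < m` keeps `patternSet (e + 1) m` inside the first `m + 1` columns, so that
it is clopen also near the limit `ω^(e+1)` of the columns. -/
def patternSet : ℕ → ℕ → Set Ordinal
  | 0, _ => ∅
  | e + 1, m => column e m ∪
      ⋃ q ∈ Finset.range m, column e q ∩ (· - ω ^ (e : Ordinal) * q) ⁻¹' patternSet e m

theorem isClopen_patternSet (e m : ℕ) : IsClopen (patternSet e m) := by
  induction e with
  | zero => exact isClopen_empty
  | succ e ih =>
    exact (isClopen_Ioc _ _).union (isClopen_biUnion_finset fun q _ =>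
      (isClopen_Ioc _ _).inter (ih.preimage (continuous_sub_right _)))

theorem mem_patternSet_succ_iff {e q m : ℕ} {x : Ordinal} (hx : x ∈ column e q) :
    x ∈ patternSet (e + 1) m ↔ q = m ∨ q < m ∧ x - ω ^ (e : Ordinal) * q ∈ patternSet e m := by
  simp only [patternSet, mem_union, mem_iUnion, mem_inter_iff, mem_preimage, Finset.mem_range,
    exists_prop]
  constructor
  · rintro (hm | ⟨q', hq', hx', hmem⟩)
    · exact .inl (eq_of_mem_column hx hm)
    · obtain rfl := eq_of_mem_column hx hx'
      exact .inr ⟨hq', hmem⟩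
  · rintro (rfl | ⟨hq, hmem⟩)
    exacts [.inl hx, .inr ⟨q, hq, hx, hmem⟩]

theorem patternSet_succ_subset (e m : ℕ) :
    patternSet (e + 1) m ⊆ Iio (ω ^ ((e + 1 : ℕ) : Ordinal)) := by
  simp only [patternSet, union_subset_iff, iUnion_subset_iff]
  exact ⟨column_subset_Iio e m, fun q _ => inter_subset_left.trans (column_subset_Iio e q)⟩

theorem exists_forall_mem_patternSet_iff (e : ℕ) (T : Finset ℕ) (hT : T.card ≤ e) :
    ∃ x : Ordinal, 0 < x ∧ x ≤ ω ^ (e : Ordinal) ∧ ∀ m, x ∈ patternSet e m ↔ m ∈ T := by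
  induction e generalizing T with
  | zero =>
    obtain rfl := Finset.card_eq_zero.1 (Nat.le_zero.1 hT)
    exact ⟨1, zero_lt_one, by simp, fun m => by simp [patternSet]⟩
  | succ e ih =>
    rcases T.eq_empty_or_nonempty with rfl | hne
    · exact ⟨_, opow_pos _ omega0_pos, le_rfl, fun m =>
        iff_of_false (fun h => self_notMem_Iio (patternSet_succ_subset e m h))
          (Finset.notMem_empty m)⟩
    · set q := T.min' hne
      obtain ⟨x, hx₀, hxe, hx⟩ :=
        ih (T.erase q) (by grind [Finset.card_erase_of_mem, T.min'_mem hne])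
      have hcol := add_mem_column q hx₀ hxe
      refine ⟨ω ^ (e : Ordinal) * q + x, hx₀.trans_le le_add_self,
        le_of_lt (column_subset_Iio e q hcol), fun m => ?_⟩
      rw [mem_patternSet_succ_iff hcol, Ordinal.add_sub_cancel, hx, Finset.mem_erase]
      constructor
      · rintro (rfl | ⟨-, -, hm⟩)
        exacts [T.min'_mem hne, hm]
      · intro hm
        rcases eq_or_ne q m with h | h
        exacts [.inl h, .inr ⟨(T.min'_le m hm).lt_of_ne h, h.symm, hm⟩]

theorem isClopen_preimage_patternSet (e m : ℕ) :
    IsClopen (Subtype.val ⁻¹' patternSet e m : Set (Iic (ω ^ (e : Ordinal)))) :=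
  (isClopen_patternSet e m).preimage continuous_subtype_val

theorem exists_forall_mem_preimage_patternSet_iff (e : ℕ) (T : Finset ℕ) (hT : T.card ≤ e) :
    ∃ x : Iic (ω ^ (e : Ordinal)), ∀ m, x ∈ Subtype.val ⁻¹' patternSet e m ↔ m ∈ T := by
  obtain ⟨x, -, hxe, hx⟩ := exists_forall_mem_patternSet_iff e T hT
  exact ⟨⟨x, hxe⟩, hx⟩

theorem mul_omega0_dvd_of_accPt {p x : Ordinal} {S : Set Ordinal} (hp : p ≠ 0)
    (hS : ∀ y ∈ S, p ∣ y) (hx : AccPt x (𝓟 S)) : p * ω ∣ x := by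
  have hp₀ : 0 < p := pos_iff_ne_zero.2 hp
  have gap : ∀ q, p * q < x → p * q + p < x := by
    intro q hq
    by_contra! hle
    obtain ⟨y, hyS, hqy, hyx⟩ := (SuccOrder.accPt_principal.1 hx).2 _ hq
    obtain ⟨t, rfl⟩ := hS y hyS
    have hlt : t < q + 1 :=
      (mul_lt_mul_iff_right₀ hp₀).1 (by rw [mul_add_one]; exact hyx.trans_le hle)
    exact hlt.not_ge (Order.add_one_le_of_lt ((mul_lt_mul_iff_right₀ hp₀).1 hqy))
  obtain ⟨q, r, hr, rfl⟩ : ∃ q r, r < p ∧ x = p * q + r :=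
    ⟨_, _, mod_lt x hp, (div_add_mod x p).symm⟩
  obtain rfl : r = 0 := by
    by_contra hr₀
    exact hr.not_gt
      ((add_lt_add_iff_left _).1 (gap q (lt_add_of_pos_right _ (pos_iff_ne_zero.2 hr₀))))
  rw [add_zero] at gap ⊢
  refine mul_dvd_mul_left p (isSuccPrelimit_iff_omega0_dvd.1 fun q' hq' => ?_)
  rw [← hq'.succ_eq, Order.succ_eq_add_one, mul_add_one] at gap
  exact (gap q' (lt_add_of_pos_right _ hp₀)).false

theorem accPt_val_image_of_accPt {c : Ordinal} {x : Iic c} {S : Set (Iic c)}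
    (hx : AccPt x (𝓟 S)) : AccPt x.val (𝓟 (Subtype.val '' S)) := by
  have hopen : IsOpen (Iic c) := Order.Iio_succ c ▸ isOpen_Iio
  rwa [← hopen.isOpenEmbedding_subtypeVal.accPt_comap_iff, comap_principal,
    Subtype.val_injective.preimage_image]

theorem omega0_opow_dvd_of_mem_iteratedDerivedSet {c : Ordinal} (r : ℕ) {x : Iic c}
    (hx : x ∈ (Set.univ : Set (Iic c))ᵈ[↑r]) : ω ^ (r : Ordinal) ∣ x.val := by
  induction r generalizing x with
  | zero => simp
  | succ r ih =>
    rw [iteratedDerivedSet_natCast_succ isClosed_univ] at hx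
    rw [Nat.cast_succ, opow_add_one]
    refine mul_omega0_dvd_of_accPt (opow_pos _ omega0_pos).ne' ?_ (accPt_val_image_of_accPt hx)
    rintro _ ⟨y, hy, rfl⟩
    exact ih hy

theorem iteratedDerivedSet_univ_Iic_omega0_opow (e : ℕ) :
    (Set.univ : Set (Iic (ω ^ (e : Ordinal))))ᵈ[↑(e + 1)] = ∅ := by
  refine eq_empty_of_forall_notMem fun x hx => ?_
  have hdvd := omega0_opow_dvd_of_mem_iteratedDerivedSet (e + 1) hx
  rw [iteratedDerivedSet_natCast_succ isClosed_univ] at hx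
  have hx₀ : x.val ≠ 0 := fun h => (accPt_val_image_of_accPt hx).not_isMin (h ▸ isMin_bot)
  refine (le_of_dvd hx₀ hdvd).not_gt (x.2.trans_lt ?_)
  exact (opow_lt_opow_iff_right one_lt_omega0).2 (by simp)

end Ordinal

section LowerBound

variable {K : Type*} [TopologicalSpace K] [CompactSpace K] {F : Finset ℕ → C(K, ℝ)} {n : ℕ}
  {L : ℝ}

theorem abs_apply_sub_apply_le
    (hF : ∀ σ τ : Finset ℕ, σ.card ≤ n → τ.card ≤ n → ‖F σ - F τ‖ ≤ L * (σ ∆ τ).card)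
    {σ τ : Finset ℕ} (hσ : σ.card ≤ n) (hτ : τ.card ≤ n) (x : K) :
    |F σ x - F τ x| ≤ L * (σ ∆ τ).card := by
  have h := ContinuousMap.dist_apply_le_dist (f := F σ) (g := F τ) x
  rw [Real.dist_eq, dist_eq_norm] at h
  exact h.trans (hF σ τ hσ hτ)

theorem abs_apply_insert_sub_apply_le
    (hF : ∀ σ τ : Finset ℕ, σ.card ≤ n → τ.card ≤ n → ‖F σ - F τ‖ ≤ L * (σ ∆ τ).card)
    {ρ : Finset ℕ} {j : ℕ} (hj : j ∉ ρ) (hρ : ρ.card < n) (x : K) :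
    |F (insert j ρ) x - F ρ x| ≤ L := by
  simpa [Finset.insert_symmDiff_self hj] using
    abs_apply_sub_apply_le hF ((Finset.card_insert_le j ρ).trans hρ) hρ.le x

/-- Restricted to a finite set, the functions `F (insert j τ)` form a bounded family in a
finite-dimensional space. -/
theorem exists_ne_abs_insert_sub_insert_lt
    (hF : ∀ σ τ : Finset ℕ, σ.card ≤ n → τ.card ≤ n → ‖F σ - F τ‖ ≤ L * (σ ∆ τ).card)
    {τ : Finset ℕ} (hτ : τ.card < n) {W : Set K} (hW : W.Finite) (s : Finset ℕ) {ε : ℝ}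
    (hε : 0 < ε) : ∃ j₁ j₂, j₁ ∉ s ∧ j₂ ∉ s ∧ j₁ ≠ j₂ ∧
      ∀ x ∈ W, |F (insert j₁ τ) x - F (insert j₂ τ) x| < ε := by
  have : Fintype W := hW.fintype
  obtain ⟨M, hM⟩ := (s ∪ τ).exists_nat_subset_range
  have hfresh : ∀ j, M + j ∉ s ∪ τ := fun j h => by simpa using hM h
  have hv : Bornology.IsBounded (range fun j (w : W) => F (insert (M + j) τ) w) := by
    refine (Metric.isBounded_closedBall (x := fun w : W => F τ w) (r := max L 0)).subset ?_
    rintro _ ⟨j, rfl⟩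
    refine (dist_pi_le_iff (le_max_right _ _)).2 fun w => le_max_of_le_left ?_
    exact abs_apply_insert_sub_apply_le hF (hfresh j <| Finset.mem_union_right s ·) hτ w
  obtain ⟨a, b, hab, hdist⟩ := exists_ne_dist_lt_of_isBounded hv hε
  refine ⟨M + a, M + b, (hfresh a <| Finset.mem_union_left τ ·),
    (hfresh b <| Finset.mem_union_left τ ·), by omega, fun x hx => ?_⟩
  exact (dist_le_pi_dist _ _ ⟨x, hx⟩).trans_lt hdist

theorem exists_insert_insert_abs_sub_le
    (hF : ∀ σ τ : Finset ℕ, σ.card ≤ n → τ.card ≤ n → ‖F σ - F τ‖ ≤ L * (σ ∆ τ).card)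
    {σ τ : Finset ℕ} (hσ : σ.card < n) (hτ : τ.card < n) {E : Set K} {c ε : ℝ} (hε : 0 < ε)
    (hc : ∀ x ∈ derivedSet E, |F σ x - F τ x| ≤ c) :
    ∃ j₁ j₂, j₁ ∉ σ ∪ τ ∧ j₂ ∉ σ ∪ τ ∧ j₁ ≠ j₂ ∧ ∀ x ∈ E,
      |F (insert j₁ σ) x - F (insert j₂ τ) x| ≤ max (c + 2 * L + ε) (L * (σ ∆ τ).card + ε) := by
  set W := {x ∈ E | c + ε ≤ |F σ x - F τ x|}
  have hW : W.Finite := Set.Finite.sep_le_of_lt_on_derivedSet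
    ((F σ).continuous.sub (F τ).continuous).abs fun x hx => (hc x hx).trans_lt (by linarith)
  obtain ⟨j₁, j₂, hj₁, hj₂, hne, hclose⟩ :=
    exists_ne_abs_insert_sub_insert_lt hF hτ hW (σ ∪ τ) hε
  refine ⟨j₁, j₂, hj₁, hj₂, hne, fun x hx => ?_⟩
  rw [Finset.mem_union, not_or] at hj₁ hj₂
  by_cases hxW : x ∈ W
  · have h₁ := abs_apply_sub_apply_le hF ((Finset.card_insert_le j₁ σ).trans hσ)
      ((Finset.card_insert_le j₁ τ).trans hτ) x
    rw [Finset.insert_symmDiff_insert hj₁.1 hj₁.2] at h₁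
    have := abs_sub_le (F (insert j₁ σ) x) (F (insert j₁ τ) x) (F (insert j₂ τ) x)
    linarith [le_max_right (c + 2 * L + ε) (L * (σ ∆ τ).card + ε), hclose x hxW]
  · have h₀ : |F σ x - F τ x| < c + ε := by simpa [W, hx] using hxW
    have h₁ := abs_apply_insert_sub_apply_le hF hj₁.1 hσ x
    have h₂ := abs_apply_insert_sub_apply_le hF hj₂.2 hτ x
    rw [abs_sub_comm] at h₂
    have := abs_sub_le (F (insert j₁ σ) x) (F σ x) (F (insert j₂ τ) x)
    have := abs_sub_le (F σ x) (F τ x) (F (insert j₂ τ) x)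
    linarith [le_max_left (c + 2 * L + ε) (L * (σ ∆ τ).card + ε)]

theorem exists_disjoint_abs_sub_le_on_iteratedDerivedSet
    (hK : (Set.univ : Set K)ᵈ[↑n] = ∅)
    (hF : ∀ σ τ : Finset ℕ, σ.card ≤ n → τ.card ≤ n → ‖F σ - F τ‖ ≤ L * (σ ∆ τ).card)
    {ε : ℝ} (hε : 0 < ε) {i : ℕ} (hi : i ≤ n) :
    ∃ σ τ : Finset ℕ, σ.card = i ∧ τ.card = i ∧ Disjoint σ τ ∧
      ∀ x ∈ (Set.univ : Set K)ᵈ[↑(n - i)], |F σ x - F τ x| ≤ 2 * (i - 1) * L + i * ε := by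
  induction i with
  | zero => exact ⟨∅, ∅, rfl, rfl, disjoint_bot_left, by simp [hK]⟩
  | succ i ih =>
    obtain ⟨σ, τ, rfl, hτ, hdisj, hbound⟩ := ih (by omega)
    have hderived : derivedSet (Set.univ : Set K)ᵈ[↑(n - (σ.card + 1))] =
        Set.univᵈ[↑(n - σ.card)] := by
      rw [show n - σ.card = n - (σ.card + 1) + 1 by omega,
        iteratedDerivedSet_natCast_succ isClosed_univ]
    obtain ⟨j₁, j₂, hj₁, hj₂, hne, hclose⟩ :=
      exists_insert_insert_abs_sub_le hF (by omega) (by omega) hε (hderived ▸ hbound)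
    rw [Finset.mem_union, not_or] at hj₁ hj₂
    refine ⟨insert j₁ σ, insert j₂ τ, Finset.card_insert_of_notMem hj₁.1,
      by rw [Finset.card_insert_of_notMem hj₂.2, hτ], ?_, fun x hx => (hclose x hx).trans ?_⟩
    · simp [Finset.disjoint_insert_left, Finset.disjoint_insert_right, hne.symm, hj₁.2, hj₂.1,
        hdisj]
    · rw [Finset.card_symmDiff_of_disjoint hdisj, hτ]
      push_cast
      refine max_le (by linarith) ?_
      nlinarith

theorem natCast_mul_le_of_iteratedDerivedSet_eq_empty
    (hK : (Set.univ : Set K)ᵈ[↑n] = ∅) (hn : n ≠ 0) {s : ℝ}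
    (hlow : ∀ σ τ : Finset ℕ, σ.card ≤ n → τ.card ≤ n → s * (σ ∆ τ).card ≤ ‖F σ - F τ‖)
    (hF : ∀ σ τ : Finset ℕ, σ.card ≤ n → τ.card ≤ n → ‖F σ - F τ‖ ≤ L * (σ ∆ τ).card) :
    n * s ≤ (n - 1) * L := by
  have hn₀ : (0 : ℝ) < n := by exact_mod_cast Nat.pos_of_ne_zero hn
  have hL : 0 ≤ L := (norm_nonneg _).trans <| by
    simpa [Finset.card_symmDiff_of_disjoint] using
      hF {0} ∅ (by simpa using Nat.one_le_iff_ne_zero.2 hn) (by simp)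
  suffices ∀ δ > 0, 2 * n * s ≤ 2 * (n - 1) * L + δ by
    have := le_of_forall_pos_le_add this
    linarith
  intro δ hδ
  obtain ⟨σ, τ, hσ, hτ, hdisj, hbound⟩ :=
    exists_disjoint_abs_sub_le_on_iteratedDerivedSet hK hF (div_pos hδ hn₀) le_rfl
  have hnorm : ‖F σ - F τ‖ ≤ 2 * (n - 1) * L + δ := by
    refine (ContinuousMap.norm_le _ ?_).2 fun x => ?_
    · have : (1 : ℝ) ≤ n := by exact_mod_cast Nat.one_le_iff_ne_zero.2 hn
      nlinarith
    · simpa [mul_div_cancel₀ _ hn₀.ne'] using hbound x (by simp)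
  have := hlow σ τ (by omega) (by omega)
  rw [Finset.card_symmDiff_of_disjoint hdisj, hσ, hτ] at this
  push_cast at this
  linarith

end LowerBound

/-- For `k ≥ 2`, the infimum over all bi-Lipschitz embeddings `f : Δ_k → C([0, ω^(k−1)])`
of the distortion of `f` equals `k/(k−1)` and is attained: `k/(k−1)` is the least `D` such
that some `f` satisfies `s·d_Δ(σ,τ) ≤ ‖f σ − f τ‖ ≤ s·D·d_Δ(σ,τ)` for some scaling
`s > 0` (a scale-invariant reformulation of `dist(f) ≤ D`). -/
theorem isLeast_distortion_deltaK_C_omega_pow_pred (k : ℕ) (hk : 2 ≤ k) :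
    IsLeast {D : ℝ |
      ∃ (f : {σ : Finset ℕ // σ.card ≤ k} →
          C(↥(Set.Iic (Ordinal.omega0 ^ ((k - 1 : ℕ) : Ordinal))), ℝ)) (s : ℝ), 0 < s ∧
        ∀ σ τ : {σ : Finset ℕ // σ.card ≤ k},
          s * ((symmDiff σ.1 τ.1).card : ℝ) ≤ ‖f σ - f τ‖ ∧
            ‖f σ - f τ‖ ≤ s * D * ((symmDiff σ.1 τ.1).card : ℝ)}
      ((k : ℝ) / ((k : ℝ) - 1)) := by
  obtain ⟨e, rfl⟩ : ∃ e, k = e + 1 := ⟨k - 1, by omega⟩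
  have he : (0 : ℝ) < e := by exact_mod_cast (by omega : 0 < e)
  simp only [Nat.cast_add, Nat.cast_one, add_sub_cancel_right]
  refine ⟨⟨fun σ => signSum (Ordinal.isClopen_preimage_patternSet e) σ.1, e / (e + 1),
    by positivity, fun σ τ => ⟨?_, ?_⟩⟩, ?_⟩
  · rw [div_mul_eq_mul_div, div_le_iff₀ (by positivity), mul_comm _ ((e : ℝ) + 1)]
    exact mul_card_symmDiff_le_mul_norm_signSum_sub _
      (Ordinal.exists_forall_mem_preimage_patternSet_iff e) σ.2 τ.2
  · rw [div_mul_div_cancel₀ (by positivity), div_self he.ne', one_mul]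
    exact norm_signSum_sub_le _ _ _
  · rintro D ⟨f, s, hs, hf⟩
    classical
    have key := natCast_mul_le_of_iteratedDerivedSet_eq_empty (L := s * D)
      (F := fun σ => if h : σ.card ≤ e + 1 then f ⟨σ, h⟩ else 0)
      (Ordinal.iteratedDerivedSet_univ_Iic_omega0_opow e) (by omega)
      (fun σ τ hσ hτ => by simpa [hσ, hτ] using (hf ⟨σ, hσ⟩ ⟨τ, hτ⟩).1)
      (fun σ τ hσ hτ => by simpa [hσ, hτ] using (hf ⟨σ, hσ⟩ ⟨τ, hτ⟩).2)
    push_cast at key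
    rw [div_le_iff₀ he]
    nlinarith
end

section
/- Let K be a compact Hausdorff space, let 0 < ε < 1/2, and let f : ℓ₁ → C(K) satisfy ‖x − y‖₁/(1+ε) ≤ ‖f(x) − f(y)‖_∞ ≤ ‖x − y‖₁ for all x, y ∈ ℓ₁. Then the map g : ℓ₁ → C(K') defined by letting g(x) be the restriction of f(x) to the derived set K' (with its subspace topology) satisfies ((1−2ε)/(1+ε))·‖x − y‖₁ ≤ ‖g(x) − g(y)‖_∞ ≤ ‖x − y‖₁ for all x, y ∈ ℓ₁. -/
/-!
Put `d = ‖x - y‖` and take `0 < θ < (1 - 2ε)/(1 + ε) · d`. It suffices that the closed set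
`D = {k | θ ≤ |f x k - f y k|}` is infinite: by compactness it then has an accumulation point,
which lies in `D ∩ K'`.

Suppose `D` is finite. Put `u j = x + d eⱼ` and `v j = y + d eⱼ` for the infinitely many
coordinates `j` at which `x - y` is tiny. For `j ≠ l`, `‖u j - v l‖₁` is almost `3d`, so
`|f (u j) - f (v l)|` exceeds `θ + 2d` at some point, which lies in `D` because `u j`, `v l` are
`d`-close to `x`, `y`. Colouring `(j, l)` by that point, pigeonhole yields a single point `k`
serving both `(u a, v b)` and `(u e, v a)`. For the 1-Lipschitz map `p ↦ f p k`, the values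
`P = f (u a) k - f (v b) k` and `Q = f (u e) k - f (v a) k` satisfy
`|P| + |Q| = max |P + Q| |P - Q| ≤ 4d`, while `|P|, |Q| > θ + 2d`.
-/

open Set Filter
open scoped NNReal

/-- The derived set `K'` of the whole space `K` (the accumulation points of `K`), as a
compact subspace of the compact Hausdorff space `K`. -/
noncomputable instance derivedSetUnivCompact (K : Type*) [TopologicalSpace K] [T1Space K]
    [CompactSpace K] : CompactSpace (derivedSet (Set.univ : Set K)) :=
  isCompact_iff_compactSpace.mp ((isClosed_derivedSet _).isCompact)

theorem abs_add_abs_le_max_abs_add_abs_sub (a b : ℝ) : |a| + |b| ≤ max |a + b| |a - b| := by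
  have := le_max_left |a + b| |a - b|
  have := le_max_right |a + b| |a - b|
  rcases abs_cases a with ⟨ha, -⟩ | ⟨ha, -⟩ <;> rcases abs_cases b with ⟨hb, -⟩ | ⟨hb, -⟩ <;>
    linarith [le_abs_self (a + b), neg_abs_le (a + b), le_abs_self (a - b), neg_abs_le (a - b)]

section LipschitzReal

variable {X : Type*} [PseudoMetricSpace X] {φ : X → ℝ}

theorem LipschitzWith.abs_sub_le_dist (hφ : LipschitzWith 1 φ) (a b : X) :
    |φ a - φ b| ≤ dist a b := by
  simpa [Real.dist_eq] using hφ.dist_le_mul a b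

theorem LipschitzWith.abs_sub_add_abs_sub_le (hφ : LipschitzWith 1 φ) (p q r s : X) :
    |φ p - φ q| + |φ r - φ s| ≤ max (dist p s + dist r q) (dist p r + dist s q) := by
  refine (abs_add_abs_le_max_abs_add_abs_sub _ _).trans (max_le_max ?_ ?_)
  · calc |φ p - φ q + (φ r - φ s)| = |(φ p - φ s) + (φ r - φ q)| := by ring_nf
      _ ≤ dist p s + dist r q :=
        (abs_add_le _ _).trans (add_le_add (hφ.abs_sub_le_dist p s) (hφ.abs_sub_le_dist r q))
  · calc |φ p - φ q - (φ r - φ s)| = |(φ p - φ r) + (φ s - φ q)| := by ring_nf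
      _ ≤ dist p r + dist s q :=
        (abs_add_le _ _).trans (add_le_add (hφ.abs_sub_le_dist p r) (hφ.abs_sub_le_dist s q))

theorem LipschitzWith.abs_sub_le_dist_add_abs_sub_add_dist (hφ : LipschitzWith 1 φ)
    (p q x y : X) : |φ p - φ q| ≤ dist p x + |φ x - φ y| + dist y q := by
  calc |φ p - φ q| ≤ |φ p - φ x| + (|φ x - φ y| + |φ y - φ q|) :=
        (abs_sub_le _ _ _).trans (by gcongr; exact abs_sub_le _ _ _)
    _ ≤ dist p x + |φ x - φ y| + dist y q := by
      linarith [hφ.abs_sub_le_dist p x, hφ.abs_sub_le_dist y q]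

end LipschitzReal

theorem Set.Infinite.exists_apply_eq_apply_of_forall_ne {ι α : Type*} {S : Set ι}
    (hS : S.Infinite) {D : Set α} (hD : D.Finite) (c : ι → ι → α)
    (hc : ∀ a ∈ S, ∀ b ∈ S, a ≠ b → c a b ∈ D) :
    ∃ a ∈ S, ∃ b ∈ S, ∃ e ∈ S, a ≠ b ∧ e ≠ a ∧ c a b = c e a := by
  -- Colour the edge `(a, b)` by `c a b`: two vertices `a ≠ b` receive the same set of colours,
  -- and the colour of `(a, b)` is one of them.
  set incoming : ι → Set α := fun b => {k | ∃ e ∈ S, e ≠ b ∧ c e b = k}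
  have hmaps : MapsTo incoming S (𝒫 D) := by
    rintro b hb _ ⟨e, he, heb, rfl⟩
    exact hc e he b hb heb
  obtain ⟨a, ha, b, hb, hab, heq⟩ := hS.exists_ne_map_eq_of_mapsTo hmaps hD.powerset
  obtain ⟨e, he, hea, hce⟩ : c a b ∈ incoming a := heq ▸ ⟨a, ha, hab, rfl⟩
  exact ⟨a, ha, b, hb, e, he, hab, hea, hce.symm⟩

theorem Set.Infinite.inter_derivedSet_univ_nonempty {X : Type*} [TopologicalSpace X]
    [CompactSpace X] {s : Set X} (hs : s.Infinite) (hc : IsClosed s) :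
    (s ∩ derivedSet univ).Nonempty := by
  obtain ⟨x, hx⟩ := hs.exists_accPt_principal
  exact ⟨x, (isClosed_iff_derivedSet_subset s).mp hc hx, derivedSet_mono _ _ (subset_univ s) hx⟩

theorem ContinuousMap.exists_norm_le_norm_apply {α E : Type*} [TopologicalSpace α]
    [CompactSpace α] [Nonempty α] [SeminormedAddCommGroup E] (g : C(α, E)) :
    ∃ x, ‖g‖ ≤ ‖g x‖ := by
  obtain ⟨x, -, hx⟩ := isCompact_univ.exists_isMaxOn univ_nonempty g.continuous.norm.continuousOn
  exact ⟨x, (g.norm_le (norm_nonneg _)).mpr fun y => hx (mem_univ y)⟩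

theorem ContinuousMap.norm_restrict_le {α E : Type*} [TopologicalSpace α] [CompactSpace α]
    [SeminormedAddCommGroup E] (g : C(α, E)) (s : Set α) [CompactSpace s] :
    ‖g.restrict s‖ ≤ ‖g‖ :=
  ((g.restrict s).norm_le (norm_nonneg _)).mpr fun x => g.norm_coe_le_norm x

namespace lp

variable {ι : Type*} {E : ι → Type*} [∀ i, NormedAddCommGroup (E i)]

theorem summable_norm_of_one (z : lp E 1) : Summable fun i => ‖z i‖ := by
  simpa using (lp.memℓp z).summable (by norm_num)

theorem norm_eq_tsum_norm_of_one (z : lp E 1) : ‖z‖ = ∑' i, ‖z i‖ := by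
  simpa using lp.norm_eq_tsum_rpow (by norm_num) z

theorem infinite_setOf_norm_lt [Infinite ι] (z : lp E 1) {δ : ℝ} (hδ : 0 < δ) :
    {i | ‖z i‖ < δ}.Infinite :=
  frequently_cofinite_iff_infinite.mp
    ((summable_norm_of_one z).tendsto_cofinite_zero.eventually (gt_mem_nhds hδ)).frequently

theorem norm_add_single_of_one [DecidableEq ι] (z : lp E 1) (m : ι) (s : E m) :
    ‖z + lp.single 1 m s‖ = ‖z‖ - ‖z m‖ + ‖z m + s‖ := by
  have hrest : (∑' i, if i = m then 0 else ‖(z + lp.single 1 m s) i‖) =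
      ∑' i, if i = m then 0 else ‖z i‖ := by
    refine tsum_congr fun i => ?_
    split_ifs with hi
    · rfl
    · simp [Pi.single_eq_of_ne hi]
  rw [norm_eq_tsum_norm_of_one, norm_eq_tsum_norm_of_one,
    (summable_norm_of_one _).tsum_eq_add_tsum_ite m,
    (summable_norm_of_one z).tsum_eq_add_tsum_ite m, hrest, lp.coeFn_add, Pi.add_apply,
    lp.single_apply_self]
  ring

theorem le_norm_add_single [DecidableEq ι] (z : lp E 1) (m : ι) (s : E m) :
    ‖z‖ + ‖s‖ - 2 * ‖z m‖ ≤ ‖z + lp.single 1 m s‖ := by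
  have h := norm_sub_le (z m + s) (z m)
  rw [add_sub_cancel_left] at h
  rw [norm_add_single_of_one]
  linarith

section Constant

variable {F : Type*} [NormedAddCommGroup F] [DecidableEq ι]

local notation "ℓ¹" => lp (fun _ : ι => F) 1

theorem norm_single_of_one (j : ι) (s : F) : ‖(lp.single 1 j s : ℓ¹)‖ = ‖s‖ :=
  lp.norm_single (E := fun _ : ι => F) (by norm_num) j s

theorem dist_add_single_add_single_le (x y : ℓ¹) (j l : ι) (s : F) :
    dist (x + lp.single 1 j s) (y + lp.single 1 l s) ≤ dist x y + 2 * ‖s‖ := by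
  calc _ ≤ dist (x + lp.single 1 j s) x + dist x y + dist y (y + lp.single 1 l s) :=
        dist_triangle4 _ _ _ _
    _ = dist x y + 2 * ‖s‖ := by
      rw [dist_self_add_left, dist_self_add_right, norm_single_of_one, norm_single_of_one]
      ring

theorem le_dist_add_single_add_single (x y : ℓ¹) {j l : ι} (hjl : j ≠ l) (s : F) :
    dist x y + 2 * ‖s‖ - 2 * ‖(x - y) j‖ - 2 * ‖(x - y) l‖ ≤
      dist (x + lp.single 1 j s) (y + lp.single 1 l s) := by
  have h : x + lp.single 1 j s - (y + lp.single 1 l s) =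
      x - y + lp.single 1 j s + lp.single 1 l (-s) := by rw [lp.single_neg]; abel
  have hl : (x - y + (lp.single 1 j s : ℓ¹)) l = (x - y) l := by
    simp [Pi.single_eq_of_ne hjl.symm]
  have h1 := le_norm_add_single (x - y) j s
  have h2 := le_norm_add_single (x - y + lp.single 1 j s) l (-s)
  rw [hl] at h2
  rw [dist_eq_norm, dist_eq_norm, h]
  linarith [_root_.norm_neg s]

theorem _root_.LipschitzWith.abs_sub_add_abs_sub_single_le {φ : ℓ¹ → ℝ}
    (hφ : LipschitzWith 1 φ) (x y : ℓ¹) (a b e : ι) {s : F} (hs : ‖s‖ ≤ dist x y) :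
    |φ (x + lp.single 1 a s) - φ (y + lp.single 1 b s)| +
      |φ (x + lp.single 1 e s) - φ (y + lp.single 1 a s)| ≤ 4 * dist x y := by
  refine (hφ.abs_sub_add_abs_sub_le _ _ _ _).trans (max_le ?_ ?_)
  · rw [dist_add_right]
    linarith [dist_add_single_add_single_le x y e b s]
  · have hx := dist_add_single_add_single_le x x a e s
    have hy := dist_add_single_add_single_le y y a b s
    rw [dist_self] at hx hy
    linarith

end Constant

end lp

section BiLipschitz

variable {K : Type*} [TopologicalSpace K] [CompactSpace K] {C : ℝ≥0}
  {f : lp (fun _ : ℕ => ℝ) 1 → C(K, ℝ)}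

theorem LipschitzWith.eval_continuousMap {X : Type*} [PseudoMetricSpace X] {g : X → C(K, ℝ)}
    (hg : LipschitzWith 1 g) (k : K) : LipschitzWith 1 fun p => g p k :=
  .of_dist_le_mul fun p q => (ContinuousMap.dist_apply_le_dist k).trans (hg.dist_le_mul p q)

theorem AntilipschitzWith.exists_dist_le_mul_abs_sub {X : Type*} [PseudoMetricSpace X]
    [Nonempty K] {g : X → C(K, ℝ)} (hg : AntilipschitzWith C g) (p q : X) :
    ∃ k, dist p q ≤ C * |g p k - g q k| := by
  obtain ⟨k, hk⟩ := (g p - g q).exists_norm_le_norm_apply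
  refine ⟨k, (hg.le_mul_dist p q).trans ?_⟩
  rw [dist_eq_norm]
  gcongr
  simpa using hk

theorem infinite_setOf_le_abs_sub (hf : LipschitzWith 1 f) (hf' : AntilipschitzWith C f)
    (x y : lp (fun _ : ℕ => ℝ) 1) {θ : ℝ} (hθ : 0 < θ)
    (hθC : C * (θ + 2 * dist x y) < 3 * dist x y) :
    {k | θ ≤ |f x k - f y k|}.Infinite := by
  intro hD
  set d := dist x y
  have hd : 0 < d := by nlinarith [C.coe_nonneg, dist_nonneg (x := x) (y := y)]
  have : Nonempty K := by
    by_contra hK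
    rw [not_nonempty_iff] at hK
    have h := hf'.le_mul_dist x y
    rw [Subsingleton.elim (f x) (f y), dist_self, mul_zero] at h
    linarith
  set δ := (3 * d - C * (θ + 2 * d)) / 4
  have hδ : 0 < δ := div_pos (sub_pos.mpr hθC) four_pos
  have hCδ : C * (θ + 2 * d) = 3 * d - 4 * δ := by simp only [δ]; ring
  set u : ℕ → lp (fun _ : ℕ => ℝ) 1 := fun j => x + lp.single 1 j d
  set v : ℕ → lp (fun _ : ℕ => ℝ) 1 := fun j => y + lp.single 1 j d
  choose Φ hΦ using hf'.exists_dist_le_mul_abs_sub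
  have hfar : ∀ j, ‖(x - y) j‖ < δ → ∀ l, ‖(x - y) l‖ < δ → j ≠ l →
      θ + 2 * d < |f (u j) (Φ (u j) (v l)) - f (v l) (Φ (u j) (v l))| := by
    intro j hj l hl hjl
    have h : d + 2 * ‖d‖ - 2 * ‖(x - y) j‖ - 2 * ‖(x - y) l‖ ≤ dist (u j) (v l) :=
      lp.le_dist_add_single_add_single x y hjl d
    rw [Real.norm_of_nonneg hd.le] at h
    refine lt_of_mul_lt_mul_left ?_ C.coe_nonneg
    linarith [hΦ (u j) (v l)]
  have hmem : ∀ j, ‖(x - y) j‖ < δ → ∀ l, ‖(x - y) l‖ < δ → j ≠ l →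
      θ ≤ |f x (Φ (u j) (v l)) - f y (Φ (u j) (v l))| := by
    intro j hj l hl hjl
    have hclose := (hf.eval_continuousMap (Φ (u j) (v l))).abs_sub_le_dist_add_abs_sub_add_dist
      (u j) (v l) x y
    simp only [u, v, dist_self_add_left, dist_self_add_right, lp.norm_single_of_one,
      Real.norm_of_nonneg hd.le] at hclose
    linarith [hfar j hj l hl hjl]
  obtain ⟨a, ha, b, hb, e, he, hab, hea, hk⟩ :=
    (lp.infinite_setOf_norm_lt (x - y) hδ).exists_apply_eq_apply_of_forall_ne hD _ hmem
  have hP := hfar a ha b hb hab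
  have hQ := hfar e he a ha hea
  rw [← hk] at hQ
  have hfour := (hf.eval_continuousMap (Φ (u a) (v b))).abs_sub_add_abs_sub_single_le x y a b e
    (Real.norm_of_nonneg hd.le).le
  linarith

theorem le_norm_restrict_derivedSet [T1Space K] (hf : LipschitzWith 1 f)
    (hf' : AntilipschitzWith C f) (x y : lp (fun _ : ℕ => ℝ) 1) :
    (3 - 2 * C) / C * dist x y ≤ ‖(f x - f y).restrict (derivedSet univ)‖ := by
  refine le_of_forall_lt_imp_le_of_dense fun θ hθ => ?_
  rcases le_or_gt θ 0 with hθ0 | hθ0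
  · exact hθ0.trans (norm_nonneg _)
  have hθC : C * (θ + 2 * dist x y) < 3 * dist x y := by
    rcases C.coe_nonneg.eq_or_lt with hC | hC
    · rw [← hC, div_zero, zero_mul] at hθ
      linarith
    · rw [div_mul_eq_mul_div, lt_div_iff₀ hC] at hθ
      linarith
  have hclosed : IsClosed {k | θ ≤ |f x k - f y k|} := isClosed_le continuous_const (by fun_prop)
  obtain ⟨k, hkθ, hk⟩ :=
    (infinite_setOf_le_abs_sub hf hf' x y hθ0 hθC).inter_derivedSet_univ_nonempty hclosed
  calc θ ≤ |f x k - f y k| := hkθ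
    _ = ‖(f x - f y).restrict (derivedSet univ) ⟨k, hk⟩‖ := by simp
    _ ≤ _ := ContinuousMap.norm_coe_le_norm _ _

end BiLipschitz

theorem restrict_to_derivedSet_embedding_general
    (K : Type*) [TopologicalSpace K] [CompactSpace K] [T2Space K]
    (ε : ℝ) (hε0 : 0 < ε)
    (f : lp (fun _ : ℕ => ℝ) 1 → C(K, ℝ))
    (hf : ∀ x y : lp (fun _ : ℕ => ℝ) 1,
      ‖x - y‖ / (1 + ε) ≤ ‖f x - f y‖ ∧ ‖f x - f y‖ ≤ ‖x - y‖) :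
    ∀ x y : lp (fun _ : ℕ => ℝ) 1,
      ((1 - 2 * ε) / (1 + ε)) * ‖x - y‖ ≤
          ‖ContinuousMap.restrict (derivedSet (Set.univ : Set K)) (f x) -
            ContinuousMap.restrict (derivedSet (Set.univ : Set K)) (f y)‖ ∧
        ‖ContinuousMap.restrict (derivedSet (Set.univ : Set K)) (f x) -
            ContinuousMap.restrict (derivedSet (Set.univ : Set K)) (f y)‖ ≤ ‖x - y‖ := by
  have hC : 0 < 1 + ε := by linarith
  have hlip : LipschitzWith 1 f := .of_dist_le_mul fun x y => by
    simpa [dist_eq_norm] using (hf x y).2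
  have hanti : AntilipschitzWith (1 + ε).toNNReal f := .of_le_mul_dist fun x y => by
    rw [Real.coe_toNNReal _ hC.le, dist_eq_norm, dist_eq_norm]
    exact (div_le_iff₀' hC).mp (hf x y).1
  intro x y
  have hrestrict : (f x).restrict (derivedSet univ) - (f y).restrict (derivedSet univ) =
      (f x - f y).restrict (derivedSet univ) := rfl
  rw [hrestrict]
  refine ⟨?_, ((f x - f y).norm_restrict_le _).trans (hf x y).2⟩
  convert le_norm_restrict_derivedSet hlip hanti x y using 1
  rw [Real.coe_toNNReal _ hC.le, dist_eq_norm]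
  ring

/-- If `K` is compact Hausdorff, `0 < ε < 1/2`, and `f : ℓ₁ → C(K)` satisfies
`‖x − y‖₁/(1+ε) ≤ ‖f x − f y‖ ≤ ‖x − y‖₁`, then `g : ℓ₁ → C(K')`, `g x = (f x)|_{K'}`,
satisfies `((1−2ε)/(1+ε))·‖x − y‖₁ ≤ ‖g x − g y‖ ≤ ‖x − y‖₁`. -/
theorem restrict_to_derivedSet_embedding
    (K : Type*) [TopologicalSpace K] [CompactSpace K] [T2Space K]
    (ε : ℝ) (hε0 : 0 < ε) (hε : ε < 1 / 2)
    (f : lp (fun _ : ℕ => ℝ) 1 → C(K, ℝ))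
    (hf : ∀ x y : lp (fun _ : ℕ => ℝ) 1,
      ‖x - y‖ / (1 + ε) ≤ ‖f x - f y‖ ∧ ‖f x - f y‖ ≤ ‖x - y‖) :
    ∀ x y : lp (fun _ : ℕ => ℝ) 1,
      ((1 - 2 * ε) / (1 + ε)) * ‖x - y‖ ≤
          ‖ContinuousMap.restrict (derivedSet (Set.univ : Set K)) (f x) -
            ContinuousMap.restrict (derivedSet (Set.univ : Set K)) (f y)‖ ∧
        ‖ContinuousMap.restrict (derivedSet (Set.univ : Set K)) (f x) -
            ContinuousMap.restrict (derivedSet (Set.univ : Set K)) (f y)‖ ≤ ‖x - y‖ :=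
  restrict_to_derivedSet_embedding_general K ε hε0 f hf
end
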